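/- arXiv:2512.23949 — 10 statements merged into one kernel-verified Lean document; each statement's English description precedes it below -/
import Mathlib

section
/- Let I be a nontrivial interval of ℝ and let f : I → ℝ be continuous and piecewise monotone (i.e., there is a closed discrete set K ⊆ I such that f is monotone on each connected component of I \ K). Then f has a turning platform if and only if f is not monotone on I. -/
open Set MeasureTheory

/-- `K` is closed and discrete in `I`: every point of `I` has a punctured
neighborhood missing `K`. -/
def ClosedDiscreteIn (K I : Set ℝ) : Prop :=
  K ⊆ I ∧ ∀ x ∈ I, ∃ ε > 0, ∀ y ∈ K, |y - x| < ε → y = x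

/-- `f` is (non-strictly) monotone on `S`. -/
def MonoOn (f : ℝ → ℝ) (S : Set ℝ) : Prop :=
  MonotoneOn f S ∨ AntitoneOn f S

/-- `K` witnesses the piecewise monotonicity of `f` on `I`. -/
def Witnesses (f : ℝ → ℝ) (I K : Set ℝ) : Prop :=
  ClosedDiscreteIn K I ∧
    ∀ x ∈ I \ K, MonoOn f (connectedComponentIn (I \ K) x)

/-- `f` is piecewise monotone on `I`. -/
def PiecewiseMonotoneOn (f : ℝ → ℝ) (I : Set ℝ) : Prop :=
  ∃ K, Witnesses f I K

/-- The platform of `f` containing `p`: the connected component of the fiber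
of `f` (within `I`) containing `p`. -/
def Platform (f : ℝ → ℝ) (I : Set ℝ) (p : ℝ) : Set ℝ :=
  connectedComponentIn {x ∈ I | f x = f p} p

/-- `P` is a platform of `f` on `I`. -/
def IsPlatform (f : ℝ → ℝ) (I P : Set ℝ) : Prop :=
  ∃ p ∈ I, P = Platform f I p

/-- `P` is a turning platform of `f` on `I`. -/
def IsTurningPlatform (f : ℝ → ℝ) (I P : Set ℝ) : Prop :=
  IsPlatform f I P ∧
  ∃ a b c ε, a ≤ b ∧ P = Icc a b ∧ (∀ x ∈ P, f x = c) ∧ 0 < ε ∧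
    Ioo (a - ε) (b + ε) ⊆ I ∧
    ((∀ x ∈ Ioo (a - ε) (b + ε) \ P, c < f x) ∨
     (∀ x ∈ Ioo (a - ε) (b + ε) \ P, f x < c))

/-- `x` is a turning point of `f` on `I`. -/
def IsTurningPoint (f : ℝ → ℝ) (I : Set ℝ) (x : ℝ) : Prop :=
  ∃ P, IsTurningPlatform f I P ∧ x ∈ P

open Topology Filter

lemma np_left (I : Set ℝ) (hI : I.OrdConnected) (f : ℝ → ℝ) (hcont : ContinuousOn f I)
    (K : Set ℝ) (hW : Witnesses f I K) {p a : ℝ} (hp : p ∈ I) (ha : a ∈ I) (hpa : p < a)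
    (hle : ∀ t ∈ Ioo p a, f t ≤ f a) :
    ∃ ε > 0, p ≤ a - ε ∧ ∀ x ∈ Ioo (a - ε) a, f x = f a → ∀ t ∈ Icc x a, f t = f a := by
  obtain ⟨hKI, hdisc⟩ := hW.1
  obtain ⟨ε₁, hε₁, hK⟩ := hdisc a ha
  refine ⟨min ε₁ (a - p), lt_min hε₁ (by linarith), by have := min_le_right ε₁ (a - p); linarith, ?_⟩
  intro x hx hfx t ht
  have hIoosub : Ioo (a - min ε₁ (a - p)) a ⊆ I \ K := by
    intro y hy
    have h1 := hy.1
    have h2 := hy.2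
    have hmr : min ε₁ (a - p) ≤ a - p := min_le_right _ _
    have hyI : y ∈ I := hI.out hp ha ⟨by linarith, le_of_lt h2⟩
    refine ⟨hyI, fun hyK => ?_⟩
    have := hK y hyK (by rw [abs_sub_lt_iff]; constructor <;>
      [linarith [hy.2]; linarith [hy.1, min_le_left ε₁ (a-p)]])
    exact absurd this (ne_of_lt hy.2)
  have hxIK : x ∈ I \ K := hIoosub hx
  have hJD : Ioo (a - min ε₁ (a - p)) a ⊆ connectedComponentIn (I \ K) x :=
    isPreconnected_Ioo.subset_connectedComponentIn hx hIoosub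
  rcases eq_or_lt_of_le ht.2 with rfl | hta
  · rfl
  rcases eq_or_lt_of_le ht.1 with rfl | hxt
  · exact hfx
  have htJ : t ∈ Ioo (a - min ε₁ (a - p)) a := ⟨lt_trans hx.1 hxt, hta⟩
  have htp : t ∈ Ioo p a := ⟨by linarith [hx.1, min_le_right ε₁ (a-p)], hta⟩
  rcases hW.2 x hxIK with hm | hm
  · have h1 : f x ≤ f t := hm (hJD hx) (hJD htJ) (le_of_lt hxt)
    have h2 : f t ≤ f a := hle t htp
    linarith [hfx ▸ h1]
  · have h1 : f t ≤ f x := hm (hJD hx) (hJD htJ) (le_of_lt hxt)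
    have h2 : f a ≤ f t := by
      have hne : (𝓝[Ioo t a] a).NeBot := right_nhdsWithin_Ioo_neBot hta
      have htend : Filter.Tendsto f (𝓝[Ioo t a] a) (𝓝 (f a)) := by
        refine (hcont a ha).mono ?_ |>.tendsto
        intro y hy
        exact hI.out hp ha ⟨le_of_lt (lt_trans htp.1 hy.1), le_of_lt hy.2⟩
      refine le_of_tendsto htend ?_
      filter_upwards [self_mem_nhdsWithin] with y hy
      exact hm (hJD htJ) (hJD ⟨lt_trans htJ.1 hy.1, hy.2⟩) (le_of_lt hy.1)
    linarith [hfx ▸ h1]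

lemma np_right (I : Set ℝ) (hI : I.OrdConnected) (f : ℝ → ℝ) (hcont : ContinuousOn f I)
    (K : Set ℝ) (hW : Witnesses f I K) {p a : ℝ} (hp : p ∈ I) (ha : a ∈ I) (hap : a < p)
    (hle : ∀ t ∈ Ioo a p, f t ≤ f a) :
    ∃ ε > 0, a + ε ≤ p ∧ ∀ x ∈ Ioo a (a + ε), f x = f a → ∀ t ∈ Icc a x, f t = f a := by
  obtain ⟨hKI, hdisc⟩ := hW.1
  obtain ⟨ε₁, hε₁, hK⟩ := hdisc a ha
  refine ⟨min ε₁ (p - a), lt_min hε₁ (by linarith),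
    by have := min_le_right ε₁ (p - a); linarith, ?_⟩
  intro x hx hfx t ht
  have hIoosub : Ioo a (a + min ε₁ (p - a)) ⊆ I \ K := by
    intro y hy
    have h1 := hy.1
    have h2 := hy.2
    have hmr : min ε₁ (p - a) ≤ p - a := min_le_right _ _
    have hyI : y ∈ I := hI.out ha hp ⟨le_of_lt h1, by linarith⟩
    refine ⟨hyI, fun hyK => ?_⟩
    have := hK y hyK (by rw [abs_sub_lt_iff]; constructor <;>
      [linarith [min_le_left ε₁ (p - a)]; linarith])
    exact absurd this (ne_of_gt h1)
  have hxIK : x ∈ I \ K := hIoosub hx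
  have hJD : Ioo a (a + min ε₁ (p - a)) ⊆ connectedComponentIn (I \ K) x :=
    isPreconnected_Ioo.subset_connectedComponentIn hx hIoosub
  rcases eq_or_lt_of_le ht.1 with rfl | hat
  · rfl
  rcases eq_or_lt_of_le ht.2 with rfl | htx
  · exact hfx
  have htJ : t ∈ Ioo a (a + min ε₁ (p - a)) := ⟨hat, lt_trans htx hx.2⟩
  have htp : t ∈ Ioo a p := ⟨hat, by linarith [hx.2, min_le_right ε₁ (p - a)]⟩
  rcases hW.2 x hxIK with hm | hm
  · have h1 : f t ≤ f x := hm (hJD htJ) (hJD hx) (le_of_lt htx)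
    have h2 : f a ≤ f t := by
      have hne : (𝓝[Ioo a t] a).NeBot := left_nhdsWithin_Ioo_neBot hat
      have htend : Filter.Tendsto f (𝓝[Ioo a t] a) (𝓝 (f a)) := by
        refine (hcont a ha).mono ?_ |>.tendsto
        intro y hy
        exact hI.out ha hp ⟨le_of_lt hy.1, le_of_lt (lt_trans hy.2 htp.2)⟩
      refine le_of_tendsto htend ?_
      filter_upwards [self_mem_nhdsWithin] with y hy
      exact hm (hJD ⟨hy.1, lt_trans hy.2 htJ.2⟩) (hJD htJ) (le_of_lt hy.2)
    linarith [hfx ▸ h1]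
  · have h1 : f x ≤ f t := hm (hJD htJ) (hJD hx) (le_of_lt htx)
    have h2 : f t ≤ f a := hle t htp
    linarith [hfx ▸ h1]

lemma peak_tp (I : Set ℝ) (hI : I.OrdConnected) (f : ℝ → ℝ) (hcont : ContinuousOn f I)
    (K : Set ℝ) (hW : Witnesses f I K) {p q r : ℝ} (hp : p ∈ I) (hr : r ∈ I)
    (hpq : p < q) (hqr : q < r) (hq : q ∈ Icc p r)
    (h1 : f p < f q) (h2 : f r < f q) : ∃ P, IsTurningPlatform f I P := by
  have hIccI : Icc p r ⊆ I := hI.out hp hr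
  obtain ⟨m, hmIcc, hmax⟩ := isCompact_Icc.exists_isMaxOn ⟨q, hq⟩ (hcont.mono hIccI)
  have hmax : ∀ t ∈ Icc p r, f t ≤ f m := hmax
  have hfpm : f p < f m := lt_of_lt_of_le h1 (hmax q hq)
  have hfrm : f r < f m := lt_of_lt_of_le h2 (hmax q hq)
  have hpm : p < m := lt_of_le_of_ne hmIcc.1 (fun h => absurd (h ▸ rfl) (ne_of_lt hfpm))
  have hmr : m < r := lt_of_le_of_ne hmIcc.2 (fun h => absurd (h ▸ rfl) (ne_of_gt hfrm))
  set S : Set ℝ := {x ∈ I | f x = f m} with hSdef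
  set C : Set ℝ := connectedComponentIn S m with hCdef
  have hmS : m ∈ S := ⟨hIccI hmIcc, rfl⟩
  have hmC : m ∈ C := mem_connectedComponentIn hmS
  have hCS : C ⊆ S := connectedComponentIn_subset _ _
  have hCpre : IsPreconnected C := isPreconnected_connectedComponentIn
  have hpS : p ∉ S := fun h => absurd h.2 (ne_of_lt hfpm)
  have hrS : r ∉ S := fun h => absurd h.2 (ne_of_lt hfrm)
  have hord := hCpre.ordConnected
  have hCIoo : C ⊆ Ioo p r := by
    intro y hy
    constructor
    · by_contra hyp
      push_neg at hyp
      exact hpS (hCS (hord.out hy hmC ⟨hyp, le_of_lt hpm⟩))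
    · by_contra hyr
      push_neg at hyr
      exact hrS (hCS (hord.out hmC hy ⟨le_of_lt hmr, hyr⟩))
  -- C is closed and compact
  have hTclosed : IsClosed (Icc p r ∩ f ⁻¹' {f m}) :=
    (hcont.mono hIccI).preimage_isClosed_of_isClosed isClosed_Icc isClosed_singleton
  have hCT : C ⊆ Icc p r ∩ f ⁻¹' {f m} := fun y hy =>
    ⟨Ioo_subset_Icc_self (hCIoo hy), (hCS hy).2⟩
  have hCclosed : IsClosed C := by
    have hsub : closure C ⊆ C := by
      refine hCpre.closure.subset_connectedComponentIn (subset_closure hmC) ?_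
      intro y hy
      have hyT := closure_minimal hCT hTclosed hy
      exact ⟨hIccI hyT.1, hyT.2⟩
    exact isClosed_of_closure_subset hsub
  have hCcompact : IsCompact C :=
    isCompact_Icc.of_isClosed_subset hCclosed (fun y hy => Ioo_subset_Icc_self (hCIoo hy))
  have hCIcc : C = Icc (sInf C) (sSup C) :=
    eq_Icc_of_connected_compact ⟨⟨m, hmC⟩, hCpre⟩ hCcompact
  set a := sInf C
  set b := sSup C
  have hab : a ≤ b := by
    have := hCIcc ▸ hmC; exact le_trans this.1 this.2
  have haC : a ∈ C := hCIcc ▸ (left_mem_Icc.mpr hab)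
  have hbC : b ∈ C := hCIcc ▸ (right_mem_Icc.mpr hab)
  have haIoo : a ∈ Ioo p r := hCIoo haC
  have hbIoo : b ∈ Ioo p r := hCIoo hbC
  have hfa : f a = f m := (hCS haC).2
  have hfb : f b = f m := (hCS hbC).2
  have haI : a ∈ I := (hCS haC).1
  have hbI : b ∈ I := (hCS hbC).1
  -- apply side lemmas
  obtain ⟨εl, hεl, hεlp, hleft⟩ := np_left I hI f hcont K hW hp haI haIoo.1
    (fun t ht => by rw [hfa]; exact hmax t ⟨le_of_lt ht.1, le_of_lt (lt_trans ht.2 haIoo.2)⟩)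
  obtain ⟨εr, hεr, hεrp, hright⟩ := np_right I hI f hcont K hW hr hbI hbIoo.2
    (fun t ht => by rw [hfb]; exact hmax t ⟨le_of_lt (lt_trans hbIoo.1 ht.1), le_of_lt ht.2⟩)
  set ε := min εl εr with hεdef
  have hε : 0 < ε := lt_min hεl hεr
  refine ⟨C, ⟨m, hIccI hmIcc, rfl⟩, a, b, f m, ε, hab, hCIcc, (fun x hx => (hCS hx).2), hε, ?_, ?_⟩
  · intro x hx
    have h1 : p ≤ a - ε := le_trans hεlp (by have := min_le_left εl εr; linarith)
    have h2 : b + ε ≤ r := le_trans (by have := min_le_right εl εr; linarith) hεrp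
    exact hIccI ⟨by have := hx.1; linarith, by have := hx.2; linarith⟩
  · right
    rintro x ⟨hx, hxC⟩
    have hxIcc : x ∈ Icc p r := by
      have h1 : p ≤ a - ε := le_trans hεlp (by have := min_le_left εl εr; linarith)
      have h2 : b + ε ≤ r := le_trans (by have := min_le_right εl εr; linarith) hεrp
      exact ⟨by have := hx.1; linarith, by have := hx.2; linarith⟩
    rcases lt_or_ge (f x) (f m) with h | h
    · exact h
    exfalso
    have hfx : f x = f m := le_antisymm (hmax x hxIcc) h
    rcases lt_or_ge x a with hxa | hax
    · -- x < a
      have hxmem : x ∈ Ioo (a - εl) a := ⟨by have := hx.1; have := min_le_left εl εr; linarith, hxa⟩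
      have hall := hleft x hxmem (by rw [hfx, hfa])
      have hIccC : Icc x a ⊆ C := by
        have hsubS : Icc x a ⊆ S := by
          intro t ht
          refine ⟨hIccI ⟨le_trans hxIcc.1 ht.1, le_trans ht.2 (le_of_lt haIoo.2)⟩, ?_⟩
          rw [hall t ht, hfa]
        have := isPreconnected_Icc.subset_connectedComponentIn
          (right_mem_Icc.mpr (le_of_lt hxa)) hsubS
        have heq : connectedComponentIn S m = connectedComponentIn S a := connectedComponentIn_eq haC
        rw [hCdef, heq]; exact this
      exact hxC (hIccC (left_mem_Icc.mpr (le_of_lt hxa)))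
    · -- x > b
      have hbx : b < x := by
        rcases lt_or_ge b x with h' | h'
        · exact h'
        · exact absurd (show x ∈ C by rw [hCIcc]; exact ⟨hax, h'⟩) hxC
      have hxmem : x ∈ Ioo b (b + εr) := ⟨hbx, by have := hx.2; have := min_le_right εl εr; linarith⟩
      have hall := hright x hxmem (by rw [hfx, hfb])
      have hIccC : Icc b x ⊆ C := by
        have hsubS : Icc b x ⊆ S := by
          intro t ht
          refine ⟨hIccI ⟨le_trans (le_of_lt hbIoo.1) ht.1, le_trans ht.2 hxIcc.2⟩, ?_⟩
          rw [hall t ht, hfb]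
        have := isPreconnected_Icc.subset_connectedComponentIn
          (left_mem_Icc.mpr (le_of_lt hbx)) hsubS
        have heq : connectedComponentIn S m = connectedComponentIn S b := connectedComponentIn_eq hbC
        rw [hCdef, heq]; exact this
      exact hxC (hIccC (right_mem_Icc.mpr (le_of_lt hbx)))

lemma tp_neg (f : ℝ → ℝ) (I P : Set ℝ) (h : IsTurningPlatform (fun x => -f x) I P) :
    IsTurningPlatform f I P := by
  obtain ⟨⟨p, hpI, hP⟩, a, b, c, ε, hab, hPicc, hc, hε, hIoo, hside⟩ := h
  refine ⟨⟨p, hpI, ?_⟩, a, b, -c, ε, hab, hPicc,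
    fun x hx => by have := hc x hx; simp at this; linarith, hε, hIoo, ?_⟩
  · rw [hP]; unfold Platform
    have : {x ∈ I | -f x = -f p} = {x ∈ I | f x = f p} := by
      ext x; simp [neg_inj]
    rw [show (fun x => -f x) p = -f p from rfl] at *
    simp only [this]
  · rcases hside with h | h
    · right; intro x hx; have := h x hx; simp only at this; linarith
    · left; intro x hx; have := h x hx; simp only at this; linarith


/-- A continuous piecewise monotone function on a nontrivial interval has a
turning platform iff it is not monotone. -/
theorem turningPlatform_iff_not_monotone
    (I : Set ℝ) (hI : I.OrdConnected) (hnt : I.Nontrivial)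
    (f : ℝ → ℝ) (hcont : ContinuousOn f I) (hpm : PiecewiseMonotoneOn f I) :
    (∃ P, IsTurningPlatform f I P) ↔ ¬ MonoOn f I := by
  constructor
  · rintro ⟨P, ⟨plat, a, b, c, ε, hab, hP, hc, hε, hIoo, hside⟩⟩ hmono
    have hxI : a - ε / 2 ∈ I := hIoo ⟨by linarith, by linarith⟩
    have hzI : b + ε / 2 ∈ I := hIoo ⟨by linarith, by linarith⟩
    have haI : a ∈ I := hIoo ⟨by linarith, by linarith⟩
    have haP : a ∈ P := hP ▸ left_mem_Icc.mpr hab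
    have hfa : f a = c := hc a haP
    have hxP : a - ε / 2 ∉ P := by rw [hP]; intro h; have := h.1; linarith
    have hzP : b + ε / 2 ∉ P := by rw [hP]; intro h; have := h.2; linarith
    have hx : a - ε / 2 ∈ Ioo (a - ε) (b + ε) \ P := ⟨⟨by linarith, by linarith⟩, hxP⟩
    have hz : b + ε / 2 ∈ Ioo (a - ε) (b + ε) \ P := ⟨⟨by linarith, by linarith⟩, hzP⟩
    rcases hside with h | h
    · have h1 := h _ hx
      have h2 := h _ hz
      rcases hmono with hm | hm
      · have := hm hxI haI (by linarith)
        rw [hfa] at this; linarith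
      · have := hm haI hzI (by linarith)
        rw [hfa] at this; linarith
    · have h1 := h _ hx
      have h2 := h _ hz
      rcases hmono with hm | hm
      · have := hm haI hzI (by linarith)
        rw [hfa] at this; linarith
      · have := hm hxI haI (by linarith)
        rw [hfa] at this; linarith
  · intro hmono
    obtain ⟨K, hW⟩ := hpm
    have hmono' : ¬ MonotoneOn f I ∧ ¬ AntitoneOn f I :=
      ⟨fun h => hmono (Or.inl h), fun h => hmono (Or.inr h)⟩
    obtain ⟨p, hp, q, hq, r, hr, hpq, hqr, hdent⟩ :=
      not_monotoneOn_not_antitoneOn_iff_exists_lt_lt.mp hmono'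
    have hqmem : q ∈ Icc p r := ⟨le_of_lt hpq, le_of_lt hqr⟩
    rcases hdent with ⟨h1, h2⟩ | ⟨h1, h2⟩
    · exact peak_tp I hI f hcont K hW hp hr hpq hqr hqmem h1 h2
    · have hW' : Witnesses (fun x => -f x) I K := by
        refine ⟨hW.1, fun x hx => ?_⟩
        rcases hW.2 x hx with hm | hm
        · exact Or.inr hm.neg
        · exact Or.inl hm.neg
      obtain ⟨P, hP⟩ := peak_tp I hI (fun x => -f x) hcont.neg K hW' hp hr hpq hqr hqmem
        (by simp; linarith) (by simp; linarith)
      exact ⟨P, tp_neg f I P hP⟩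
end

section
/- Let n be a nonnegative integer, I a nontrivial interval of ℝ, and f : I → ℝ a C^n function with no n-flat points (i.e., no point p ∈ I with D^k f(p) = 0 for all integers 0 ≤ k ≤ n). Then the zero set of f is closed and discrete in I. -/
/-
If `D^k f (x) ≠ 0`, then zeros of `f` in `I` cannot accumulate at `x`; this goes by induction on
`k`. For `k = 0`, or whenever `f x ≠ 0`, it is continuity. Otherwise `f x = 0`, and a zero `y` of
`f` near `x` yields by Rolle's theorem a zero of `f'` strictly between `x` and `y`, so zeros of
`f` accumulating at `x` would give zeros of `f'` accumulating at `x`.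
-/

open Set MeasureTheory

open Filter Topology

theorem Set.OrdConnected.uniqueDiffOn {I : Set ℝ} (hI : I.OrdConnected) (hnt : I.Nontrivial) :
    UniqueDiffOn ℝ I := by
  obtain ⟨a, ha, b, hb, hab⟩ := hnt
  refine uniqueDiffOn_convex hI.convex ((nonempty_uIoo.2 hab).mono ?_)
  exact interior_maximal (uIoo_subset_uIcc_self.trans (hI.uIcc_subset ha hb)) isOpen_Ioo

theorem Set.OrdConnected.exists_mem_uIoo_derivWithin_eq_zero {I : Set ℝ} {f : ℝ → ℝ}
    (hI : I.OrdConnected) (hf : ContinuousOn f I) {a b : ℝ} (ha : a ∈ I) (hb : b ∈ I)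
    (hab : a ≠ b) (hfab : f a = f b) : ∃ c ∈ uIoo a b, derivWithin f I c = 0 := by
  have hsub : uIcc a b ⊆ I := hI.uIcc_subset ha hb
  obtain ⟨c, hc, hextr⟩ := exists_isLocalExtr_uIoo hab (hf.mono hsub) hfab
  have hI_nhds : I ∈ 𝓝 c :=
    mem_of_superset (isOpen_Ioo.mem_nhds hc) (uIoo_subset_uIcc_self.trans hsub)
  -- no differentiability is needed: `deriv f c = 0` also where `f` is not differentiable
  exact ⟨c, hc, (derivWithin_of_mem_nhds hI_nhds).trans hextr.deriv_eq_zero⟩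

/-- `x` itself need not be a zero of `f`. -/
def IsolatedFromZerosWithin (f : ℝ → ℝ) (I : Set ℝ) (x : ℝ) : Prop :=
  ∃ ε > 0, ∀ y ∈ I, |y - x| < ε → f y = 0 → y = x

theorem isolatedFromZerosWithin_of_ne_zero {I : Set ℝ} {f : ℝ → ℝ} {x : ℝ}
    (hf : ContinuousWithinAt f I x) (hx : f x ≠ 0) : IsolatedFromZerosWithin f I x := by
  obtain ⟨ε, hε, hne⟩ :=
    Metric.eventually_nhds_iff.1 (eventually_nhdsWithin_iff.1 (hf.eventually_ne hx))
  exact ⟨ε, hε, fun y hy hyx hfy => absurd hfy (hne (by rwa [Real.dist_eq]) hy)⟩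

theorem isolatedFromZerosWithin_of_derivWithin {I : Set ℝ} {f : ℝ → ℝ} {x : ℝ}
    (hI : I.OrdConnected) (hf : ContinuousOn f I) (hx : x ∈ I)
    (hf' : IsolatedFromZerosWithin (derivWithin f I) I x) : IsolatedFromZerosWithin f I x := by
  by_cases hfx : f x = 0
  swap
  · exact isolatedFromZerosWithin_of_ne_zero (hf x hx) hfx
  obtain ⟨ε, hε, hiso⟩ := hf'
  refine ⟨ε, hε, fun y hy hyx hfy => ?_⟩
  by_contra hxy
  obtain ⟨c, hc, hf'c⟩ :=
    hI.exists_mem_uIoo_derivWithin_eq_zero hf hx hy (Ne.symm hxy) (hfx.trans hfy.symm)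
  have hcx : |c - x| < ε := (abs_sub_left_of_mem_uIcc (uIoo_subset_uIcc_self hc)).trans_lt hyx
  have hcI : c ∈ I := hI.uIcc_subset hx hy (uIoo_subset_uIcc_self hc)
  exact left_notMem_uIoo (hiso c hcI hcx hf'c ▸ hc)

theorem isolatedFromZerosWithin_of_iteratedDerivWithin_ne_zero {I : Set ℝ}
    (hI : I.OrdConnected) (hU : UniqueDiffOn ℝ I) {x : ℝ} (hx : x ∈ I) :
    ∀ {k : ℕ} {f : ℝ → ℝ}, ContDiffOn ℝ k f I → iteratedDerivWithin k f I x ≠ 0 →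
      IsolatedFromZerosWithin f I x
  | 0, f, hf, hk => isolatedFromZerosWithin_of_ne_zero (hf.continuousOn x hx) (by simpa using hk)
  | k + 1, f, hf, hk => by
    rw [iteratedDerivWithin_succ'] at hk
    have hf' : ContDiffOn ℝ k (derivWithin f I) I := hf.derivWithin hU (by norm_cast)
    exact isolatedFromZerosWithin_of_derivWithin hI hf.continuousOn hx
      (isolatedFromZerosWithin_of_iteratedDerivWithin_ne_zero hI hU hx hf' hk)

/-- If a `C^n` function on a nontrivial interval has no `n`-flat points, then
its zero set is closed and discrete in the interval. -/
theorem zeroSet_closedDiscrete_of_no_flat_points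
    (n : ℕ) (I : Set ℝ) (hI : I.OrdConnected) (hnt : I.Nontrivial)
    (f : ℝ → ℝ) (hf : ContDiffOn ℝ n f I)
    (hflat : ∀ p ∈ I, ∃ k ≤ n, iteratedDerivWithin k f I p ≠ 0) :
    ClosedDiscreteIn {x ∈ I | f x = 0} I := by
  refine ⟨fun x hx => hx.1, fun x hx => ?_⟩
  obtain ⟨k, hkn, hk⟩ := hflat x hx
  obtain ⟨ε, hε, hiso⟩ := isolatedFromZerosWithin_of_iteratedDerivWithin_ne_zero hI
    (hI.uniqueDiffOn hnt) hx (hf.of_le (by exact_mod_cast hkn)) hk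
  exact ⟨ε, hε, fun y hy hyx => hiso y hy.1 hyx hy.2⟩
end

section
/- Let I be a nontrivial interval of ℝ and let f : I → ℝ be a C^1 function whose derivative Df has a closed discrete zero set Z₁ in I. Then the set E₀ of turning points of f is closed discrete in I, and f is strictly monotone on each connected component of I \ E₀. -/
open Set MeasureTheory

/-- A continuous injective function on an ord-connected set is strictly
monotone or strictly antitone. -/
theorem aux_strictMonoOn_or_strictAntiOn {f : ℝ → ℝ} {C : Set ℝ}
    (hC : C.OrdConnected) (hc : ContinuousOn f C) (hi : InjOn f C) :
    StrictMonoOn f C ∨ StrictAntiOn f C := by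
  by_cases hne : ∃ a ∈ C, ∃ b ∈ C, a < b
  · obtain ⟨a, ha, b, hb, hab⟩ := hne
    have key : ∀ x ∈ C, ∀ y ∈ C, x < y →
        (f a < f b → f x < f y) ∧ (f b < f a → f y < f x) := by
      intro x hx y hy hxy
      have hs : min a x ∈ C := by rcases min_choice a x with h | h <;> rw [h] <;> assumption
      have ht : max b y ∈ C := by rcases max_choice b y with h | h <;> rw [h] <;> assumption
      have hst : min a x ≤ max b y :=
        le_trans (min_le_left a x) (le_trans hab.le (le_max_left b y))
      have hsub : Icc (min a x) (max b y) ⊆ C := hC.out hs ht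
      have habm : a ∈ Icc (min a x) (max b y) :=
        ⟨min_le_left _ _, le_trans hab.le (le_max_left _ _)⟩
      have hbbm : b ∈ Icc (min a x) (max b y) :=
        ⟨le_trans (min_le_left _ _) hab.le, le_max_left _ _⟩
      have hxm : x ∈ Icc (min a x) (max b y) :=
        ⟨min_le_right _ _, le_trans hxy.le (le_max_right _ _)⟩
      have hym : y ∈ Icc (min a x) (max b y) :=
        ⟨le_trans (min_le_right a x) hxy.le, le_max_right _ _⟩
      rcases ContinuousOn.strictMonoOn_of_injOn_Icc' hst (hc.mono hsub) (hi.mono hsub)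
          with hm | hm
      · exact ⟨fun _ => hm hxm hym hxy,
          fun hba => absurd (hm habm hbbm hab) (not_lt.2 hba.le)⟩
      · exact ⟨fun hab' => absurd (hm habm hbbm hab) (not_lt.2 hab'.le),
          fun _ => hm hxm hym hxy⟩
    have hfne : f a ≠ f b := fun h => hab.ne (hi ha hb h)
    rcases hfne.lt_or_gt with h | h
    · exact Or.inl fun x hx y hy hxy => (key x hx y hy hxy).1 h
    · exact Or.inr fun x hx y hy hxy => (key x hx y hy hxy).2 h
  · push_neg at hne
    exact Or.inl fun x hx y hy hxy => absurd hxy (not_lt.2 (hne x hx y hy))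

/-- A local maximum (on a symmetric open interval inside `I`) is a turning
point, provided zeros of the derivative are discrete. -/
theorem isTurningPoint_of_localMax {f : ℝ → ℝ} {I : Set ℝ}
    (hfc : ContinuousOn f I)
    (hz : ClosedDiscreteIn {x ∈ I | derivWithin f I x = 0} I)
    {m ε₀ : ℝ} (hε₀ : 0 < ε₀) (hsub : Ioo (m - ε₀) (m + ε₀) ⊆ I)
    (hmax : ∀ z ∈ Ioo (m - ε₀) (m + ε₀), f z ≤ f m) :
    IsTurningPoint f I m := by
  have hmIoo : m ∈ Ioo (m - ε₀) (m + ε₀) := ⟨by linarith, by linarith⟩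
  have hmI : m ∈ I := hsub hmIoo
  obtain ⟨ε₁, hε₁, hdisc⟩ := hz.2 m hmI
  set ε := min ε₀ ε₁ with hεdef
  have hε : 0 < ε := lt_min hε₀ hε₁
  have hεε₀ : ε ≤ ε₀ := min_le_left _ _
  have hεε₁ : ε ≤ ε₁ := min_le_right _ _
  have hIooSub : Ioo (m - ε) (m + ε) ⊆ Ioo (m - ε₀) (m + ε₀) :=
    Ioo_subset_Ioo (by linarith) (by linarith)
  have strict : ∀ z ∈ Ioo (m - ε) (m + ε), z ≠ m → f z < f m := by
    intro z hzmem hzne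
    rcases (hmax z (hIooSub hzmem)).lt_or_eq with h | h
    · exact h
    exfalso
    rcases hzne.lt_or_gt with hzm | hmz
    · have hIcc : Icc z m ⊆ Ioo (m - ε₀) (m + ε₀) := by
        intro t ht
        exact ⟨lt_of_lt_of_le (hIooSub hzmem).1 ht.1, lt_of_le_of_lt ht.2 hmIoo.2⟩
      obtain ⟨c, hc, hc0⟩ := exists_deriv_eq_zero hzm (hfc.mono (hIcc.trans hsub)) h
      have hcIoo : c ∈ Ioo (m - ε₀) (m + ε₀) := hIcc (Ioo_subset_Icc_self hc)
      have hcd : derivWithin f I c = 0 := by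
        rw [derivWithin_of_mem_nhds
          (Filter.mem_of_superset (isOpen_Ioo.mem_nhds hcIoo) hsub)]
        exact hc0
      have hceq : c = m := by
        refine hdisc c ⟨hsub hcIoo, hcd⟩ ?_
        have h1 : m - ε < z := hzmem.1
        rw [abs_sub_lt_iff]
        constructor <;> [linarith [hc.2]; linarith [hc.1]]
      exact (ne_of_lt hc.2) hceq
    · have hIcc : Icc m z ⊆ Ioo (m - ε₀) (m + ε₀) := by
        intro t ht
        exact ⟨lt_of_lt_of_le hmIoo.1 ht.1, lt_of_le_of_lt ht.2 (hIooSub hzmem).2⟩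
      obtain ⟨c, hc, hc0⟩ := exists_deriv_eq_zero hmz (hfc.mono (hIcc.trans hsub)) h.symm
      have hcIoo : c ∈ Ioo (m - ε₀) (m + ε₀) := hIcc (Ioo_subset_Icc_self hc)
      have hcd : derivWithin f I c = 0 := by
        rw [derivWithin_of_mem_nhds
          (Filter.mem_of_superset (isOpen_Ioo.mem_nhds hcIoo) hsub)]
        exact hc0
      have hceq : c = m := by
        refine hdisc c ⟨hsub hcIoo, hcd⟩ ?_
        have h2 : z < m + ε := hzmem.2
        rw [abs_sub_lt_iff]
        constructor <;> [linarith [hc.2]; linarith [hc.1]]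
      exact (ne_of_gt hc.1) hceq
  have hmem : m ∈ Platform f I m := mem_connectedComponentIn ⟨hmI, rfl⟩
  have hsubfib : Platform f I m ⊆ {x ∈ I | f x = f m} :=
    connectedComponentIn_subset _ _
  have hord : OrdConnected (Platform f I m) :=
    isPreconnected_connectedComponentIn.ordConnected
  have hplat : Platform f I m = Icc m m := by
    rw [Icc_self]
    apply Subset.antisymm
    · intro q hq
      by_contra hqm
      rw [mem_singleton_iff] at hqm
      rcases Ne.lt_or_gt hqm with hlt | hlt
      · set w := max q (m - ε / 2) with hw
        have hwP : w ∈ Platform f I m :=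
          hord.out hq hmem ⟨le_max_left _ _, max_le hlt.le (by linarith)⟩
        have hwlt : w < m := max_lt hlt (by linarith)
        have hwI : w ∈ Ioo (m - ε) (m + ε) :=
          ⟨lt_of_lt_of_le (by linarith : m - ε < m - ε / 2) (le_max_right _ _),
            by linarith⟩
        exact (strict w hwI (ne_of_lt hwlt)).ne (hsubfib hwP).2
      · set w := min q (m + ε / 2) with hw
        have hwP : w ∈ Platform f I m :=
          hord.out hmem hq ⟨le_min hlt.le (by linarith), min_le_left _ _⟩
        have hwgt : m < w := lt_min hlt (by linarith)
        have hwI : w ∈ Ioo (m - ε) (m + ε) :=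
          ⟨by linarith,
            lt_of_le_of_lt (min_le_right _ _) (by linarith : m + ε / 2 < m + ε)⟩
        exact (strict w hwI (ne_of_gt hwgt)).ne (hsubfib hwP).2
    · intro q hq
      rw [mem_singleton_iff] at hq
      rw [hq]
      exact hmem
  refine ⟨Platform f I m, ⟨⟨m, hmI, rfl⟩, m, m, f m, ε, le_rfl, hplat,
    fun x hx => (hsubfib hx).2, hε, hIooSub.trans hsub, Or.inr ?_⟩, hmem⟩
  intro z hz
  refine strict z hz.1 ?_
  intro h
  exact hz.2 (h ▸ hmem)

/-- A local minimum (on a symmetric open interval inside `I`) is a turning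
point, provided zeros of the derivative are discrete. -/
theorem isTurningPoint_of_localMin {f : ℝ → ℝ} {I : Set ℝ}
    (hfc : ContinuousOn f I)
    (hz : ClosedDiscreteIn {x ∈ I | derivWithin f I x = 0} I)
    {m ε₀ : ℝ} (hε₀ : 0 < ε₀) (hsub : Ioo (m - ε₀) (m + ε₀) ⊆ I)
    (hmin : ∀ z ∈ Ioo (m - ε₀) (m + ε₀), f m ≤ f z) :
    IsTurningPoint f I m := by
  have hmIoo : m ∈ Ioo (m - ε₀) (m + ε₀) := ⟨by linarith, by linarith⟩
  have hmI : m ∈ I := hsub hmIoo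
  obtain ⟨ε₁, hε₁, hdisc⟩ := hz.2 m hmI
  set ε := min ε₀ ε₁ with hεdef
  have hε : 0 < ε := lt_min hε₀ hε₁
  have hεε₀ : ε ≤ ε₀ := min_le_left _ _
  have hεε₁ : ε ≤ ε₁ := min_le_right _ _
  have hIooSub : Ioo (m - ε) (m + ε) ⊆ Ioo (m - ε₀) (m + ε₀) :=
    Ioo_subset_Ioo (by linarith) (by linarith)
  have strict : ∀ z ∈ Ioo (m - ε) (m + ε), z ≠ m → f m < f z := by
    intro z hzmem hzne
    rcases (hmin z (hIooSub hzmem)).lt_or_eq with h | h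
    · exact h
    exfalso
    rcases hzne.lt_or_gt with hzm | hmz
    · have hIcc : Icc z m ⊆ Ioo (m - ε₀) (m + ε₀) := by
        intro t ht
        exact ⟨lt_of_lt_of_le (hIooSub hzmem).1 ht.1, lt_of_le_of_lt ht.2 hmIoo.2⟩
      obtain ⟨c, hc, hc0⟩ := exists_deriv_eq_zero hzm (hfc.mono (hIcc.trans hsub)) h.symm
      have hcIoo : c ∈ Ioo (m - ε₀) (m + ε₀) := hIcc (Ioo_subset_Icc_self hc)
      have hcd : derivWithin f I c = 0 := by
        rw [derivWithin_of_mem_nhds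
          (Filter.mem_of_superset (isOpen_Ioo.mem_nhds hcIoo) hsub)]
        exact hc0
      have hceq : c = m := by
        refine hdisc c ⟨hsub hcIoo, hcd⟩ ?_
        have h1 : m - ε < z := hzmem.1
        rw [abs_sub_lt_iff]
        constructor <;> [linarith [hc.2]; linarith [hc.1]]
      exact (ne_of_lt hc.2) hceq
    · have hIcc : Icc m z ⊆ Ioo (m - ε₀) (m + ε₀) := by
        intro t ht
        exact ⟨lt_of_lt_of_le hmIoo.1 ht.1, lt_of_le_of_lt ht.2 (hIooSub hzmem).2⟩
      obtain ⟨c, hc, hc0⟩ := exists_deriv_eq_zero hmz (hfc.mono (hIcc.trans hsub)) h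
      have hcIoo : c ∈ Ioo (m - ε₀) (m + ε₀) := hIcc (Ioo_subset_Icc_self hc)
      have hcd : derivWithin f I c = 0 := by
        rw [derivWithin_of_mem_nhds
          (Filter.mem_of_superset (isOpen_Ioo.mem_nhds hcIoo) hsub)]
        exact hc0
      have hceq : c = m := by
        refine hdisc c ⟨hsub hcIoo, hcd⟩ ?_
        have h2 : z < m + ε := hzmem.2
        rw [abs_sub_lt_iff]
        constructor <;> [linarith [hc.2]; linarith [hc.1]]
      exact (ne_of_gt hc.1) hceq
  have hmem : m ∈ Platform f I m := mem_connectedComponentIn ⟨hmI, rfl⟩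
  have hsubfib : Platform f I m ⊆ {x ∈ I | f x = f m} :=
    connectedComponentIn_subset _ _
  have hord : OrdConnected (Platform f I m) :=
    isPreconnected_connectedComponentIn.ordConnected
  have hplat : Platform f I m = Icc m m := by
    rw [Icc_self]
    apply Subset.antisymm
    · intro q hq
      by_contra hqm
      rw [mem_singleton_iff] at hqm
      rcases Ne.lt_or_gt hqm with hlt | hlt
      · set w := max q (m - ε / 2) with hw
        have hwP : w ∈ Platform f I m :=
          hord.out hq hmem ⟨le_max_left _ _, max_le hlt.le (by linarith)⟩
        have hwlt : w < m := max_lt hlt (by linarith)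
        have hwI : w ∈ Ioo (m - ε) (m + ε) :=
          ⟨lt_of_lt_of_le (by linarith : m - ε < m - ε / 2) (le_max_right _ _),
            by linarith⟩
        exact (strict w hwI (ne_of_lt hwlt)).ne' (hsubfib hwP).2
      · set w := min q (m + ε / 2) with hw
        have hwP : w ∈ Platform f I m :=
          hord.out hmem hq ⟨le_min hlt.le (by linarith), min_le_left _ _⟩
        have hwgt : m < w := lt_min hlt (by linarith)
        have hwI : w ∈ Ioo (m - ε) (m + ε) :=
          ⟨by linarith,
            lt_of_le_of_lt (min_le_right _ _) (by linarith : m + ε / 2 < m + ε)⟩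
        exact (strict w hwI (ne_of_gt hwgt)).ne' (hsubfib hwP).2
    · intro q hq
      rw [mem_singleton_iff] at hq
      rw [hq]
      exact hmem
  refine ⟨Platform f I m, ⟨⟨m, hmI, rfl⟩, m, m, f m, ε, le_rfl, hplat,
    fun x hx => (hsubfib hx).2, hε, hIooSub.trans hsub, Or.inl ?_⟩, hmem⟩
  intro z hz
  refine strict z hz.1 ?_
  intro h
  exact hz.2 (h ▸ hmem)

/-- A turning point lies in `I` and is a zero of the derivative. -/
theorem turningPoint_mem_zeroSet {f : ℝ → ℝ} {I : Set ℝ} {x : ℝ}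
    (hx : IsTurningPoint f I x) : x ∈ I ∧ derivWithin f I x = 0 := by
  obtain ⟨P, ⟨⟨p, hp, hP⟩, a, b, c, ε, hab, hPIcc, hfcn, hε, hsub, hd⟩, hxP⟩ := hx
  have hxIcc : x ∈ Icc a b := hPIcc ▸ hxP
  have hxIoo : x ∈ Ioo (a - ε) (b + ε) :=
    ⟨by linarith [hxIcc.1], by linarith [hxIcc.2]⟩
  have hIoomem : Ioo (a - ε) (b + ε) ∈ nhds x := isOpen_Ioo.mem_nhds hxIoo
  have hnhds : I ∈ nhds x := Filter.mem_of_superset hIoomem hsub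
  have hfx : f x = c := hfcn x hxP
  have hderiv : deriv f x = 0 := by
    rcases hd with hd | hd
    · refine IsLocalMin.deriv_eq_zero ?_
      filter_upwards [hIoomem] with z hzmem
      by_cases hzP : z ∈ P
      · rw [hfcn z hzP, hfx]
      · rw [hfx]; exact (hd z ⟨hzmem, hzP⟩).le
    · refine IsLocalMax.deriv_eq_zero ?_
      filter_upwards [hIoomem] with z hzmem
      by_cases hzP : z ∈ P
      · rw [hfcn z hzP, hfx]
      · rw [hfx]; exact (hd z ⟨hzmem, hzP⟩).le
  rw [derivWithin_of_mem_nhds hnhds]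
  exact ⟨hsub hxIoo, hderiv⟩

/-- If `f` is `C¹` and the zero set of `Df` is closed discrete in `I`, then
the set of turning points of `f` is closed discrete in `I` and `f` is strictly
monotone on each component of its complement. -/
theorem turningPoints_closedDiscrete_of_deriv_zeroSet_discrete
    (I : Set ℝ) (hI : I.OrdConnected) (hnt : I.Nontrivial)
    (f : ℝ → ℝ) (hf : ContDiffOn ℝ 1 f I)
    (hz : ClosedDiscreteIn {x ∈ I | derivWithin f I x = 0} I) :
    ClosedDiscreteIn {x | IsTurningPoint f I x} I ∧
    ∀ x ∈ I \ {x | IsTurningPoint f I x},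
      StrictMonoOn f (connectedComponentIn (I \ {x | IsTurningPoint f I x}) x) ∨
      StrictAntiOn f (connectedComponentIn (I \ {x | IsTurningPoint f I x}) x) := by
  have hfc : ContinuousOn f I := hf.continuousOn
  constructor
  · refine ⟨fun x hx => (turningPoint_mem_zeroSet hx).1, ?_⟩
    intro x hxI
    obtain ⟨ε, hε, h⟩ := hz.2 x hxI
    refine ⟨ε, hε, fun y hy hyx => ?_⟩
    exact h y ⟨(turningPoint_mem_zeroSet hy).1, (turningPoint_mem_zeroSet hy).2⟩ hyx
  · intro x hx
    set E := {x | IsTurningPoint f I x} with hE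
    set C := connectedComponentIn (I \ E) x with hC
    have hCsub : C ⊆ I \ E := connectedComponentIn_subset _ _
    have hCord : C.OrdConnected := isPreconnected_connectedComponentIn.ordConnected
    have hCI : C ⊆ I := fun t ht => (hCsub ht).1
    have key : ∀ u v : ℝ, u ∈ C → v ∈ C → u < v → f u = f v → False := by
      intro u v hu hv huv hfuv
      have hIcc : Icc u v ⊆ C := hCord.out hu hv
      have hIccI : Icc u v ⊆ I := hIcc.trans hCI
      have hcont : ContinuousOn f (Icc u v) := hfc.mono hIccI
      have hne : (Icc u v).Nonempty := nonempty_Icc.2 huv.le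
      obtain ⟨mx, hmx, hmax⟩ := isCompact_Icc.exists_isMaxOn hne hcont
      have hmax' : ∀ z ∈ Icc u v, f z ≤ f mx := fun z hzm => hmax hzm
      -- a point `m` in the open interval which is a local max or local min
      have hturn : ∃ m ∈ Ioo u v, IsTurningPoint f I m := by
        by_cases hgt : f u < f mx
        · have hmxIoo : mx ∈ Ioo u v := by
            rcases hmx.1.lt_or_eq with h1 | h1
            · rcases hmx.2.lt_or_eq with h2 | h2
              · exact ⟨h1, h2⟩
              · exact absurd (h2 ▸ hgt) (by rw [← hfuv]; exact lt_irrefl _)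
            · exact absurd (h1 ▸ hgt) (lt_irrefl _)
          set ε₀ := min (mx - u) (v - mx) with hε₀def
          have hε₀ : 0 < ε₀ := lt_min (by linarith [hmxIoo.1]) (by linarith [hmxIoo.2])
          have hsub0 : Ioo (mx - ε₀) (mx + ε₀) ⊆ Icc u v := by
            intro t ht
            have h1 : ε₀ ≤ mx - u := min_le_left _ _
            have h2 : ε₀ ≤ v - mx := min_le_right _ _
            exact ⟨by linarith [ht.1], by linarith [ht.2]⟩
          exact ⟨mx, hmxIoo, isTurningPoint_of_localMax hfc hz hε₀
            (hsub0.trans hIccI) (fun z hzm => hmax' z (hsub0 hzm))⟩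
        · push_neg at hgt
          have hmaxu : ∀ z ∈ Icc u v, f z ≤ f u := fun z hzm => (hmax' z hzm).trans hgt
          obtain ⟨mn, hmn, hmin⟩ := isCompact_Icc.exists_isMinOn hne hcont
          have hmin' : ∀ z ∈ Icc u v, f mn ≤ f z := fun z hzm => hmin hzm
          by_cases hlt : f mn < f u
          · have hmnIoo : mn ∈ Ioo u v := by
              rcases hmn.1.lt_or_eq with h1 | h1
              · rcases hmn.2.lt_or_eq with h2 | h2
                · exact ⟨h1, h2⟩
                · exact absurd (h2 ▸ hlt) (by rw [← hfuv]; exact lt_irrefl _)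
              · exact absurd (h1 ▸ hlt) (lt_irrefl _)
            set ε₀ := min (mn - u) (v - mn) with hε₀def
            have hε₀ : 0 < ε₀ := lt_min (by linarith [hmnIoo.1]) (by linarith [hmnIoo.2])
            have hsub0 : Ioo (mn - ε₀) (mn + ε₀) ⊆ Icc u v := by
              intro t ht
              have h1 : ε₀ ≤ mn - u := min_le_left _ _
              have h2 : ε₀ ≤ v - mn := min_le_right _ _
              exact ⟨by linarith [ht.1], by linarith [ht.2]⟩
            exact ⟨mn, hmnIoo, isTurningPoint_of_localMin hfc hz hε₀
              (hsub0.trans hIccI) (fun z hzm => hmin' z (hsub0 hzm))⟩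
          · push_neg at hlt
            -- f is constant equal to f u on Icc u v
            have hconst : ∀ z ∈ Icc u v, f z = f u := by
              intro z hzm
              exact le_antisymm (hmaxu z hzm) ((hlt.trans (hmin' z hzm)))
            set m := (u + v) / 2 with hm
            have hmIoo : m ∈ Ioo u v := ⟨by linarith, by linarith⟩
            set ε₀ := (v - u) / 2 with hε₀def
            have hε₀ : 0 < ε₀ := by simp only [hε₀def]; linarith
            have hsub0 : Ioo (m - ε₀) (m + ε₀) ⊆ Icc u v := by
              intro t ht
              constructor
              · have := ht.1; simp only [hm, hε₀def] at this ⊢; linarith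
              · have := ht.2; simp only [hm, hε₀def] at this ⊢; linarith
            refine ⟨m, hmIoo, isTurningPoint_of_localMax hfc hz hε₀
              (hsub0.trans hIccI) ?_⟩
            intro z hzm
            rw [hconst z (hsub0 hzm), hconst m (hsub0 ⟨by linarith, by linarith⟩)]
          
      obtain ⟨m, hmIoo, hmturn⟩ := hturn
      exact (hCsub (hIcc (Ioo_subset_Icc_self hmIoo))).2 hmturn
    have hinj : InjOn f C := by
      intro u hu v hv huv
      by_contra hne
      rcases Ne.lt_or_gt hne with h | h
      · exact key u v hu hv h huv
      · exact key v u hv hu h huv.symm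
    exact aux_strictMonoOn_or_strictAntiOn hCord (hfc.mono hCI) hinj
end

section
/- Let I be a nontrivial interval of ℝ and let f, g : I → ℝ be C^1 functions. If the zero set of Df is closed and discrete in I, and Df(x) and Dg(x) have the same sign for every x ∈ I (i.e., at each x they are both positive, both negative, or both zero), then g is comonotone with f: taking K₀ to be the set of turning points of f, K₀ is closed discrete, and f and g have the same monotonicity (both increasing or both decreasing) on each connected component of I \ K₀. -/
open Set MeasureTheory

/- ---------- auxiliary lemmas ---------- -/

lemma aux_mem_nhds_of_Ioo {I : Set ℝ} (hI : I.OrdConnected) {u v y : ℝ}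
    (hu : u ∈ I) (hv : v ∈ I) (hy : y ∈ Ioo u v) : I ∈ nhds y :=
  Filter.mem_of_superset (Ioo_mem_nhds hy.1 hy.2)
    (Ioo_subset_Icc_self.trans (hI.out hu hv))

lemma aux_isTurningPoint_of_neg {f : ℝ → ℝ} {I : Set ℝ} {m : ℝ}
    (h : IsTurningPoint (fun x => -f x) I m) : IsTurningPoint f I m := by
  obtain ⟨P, ⟨⟨p, hp, hP⟩, a, b, c, ε, hab, hPab, hc, hε, hsub, hstrict⟩, hmP⟩ := h
  refine ⟨P, ⟨⟨p, hp, ?_⟩, a, b, -c, ε, hab, hPab, ?_, hε, hsub, ?_⟩, hmP⟩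
  · rw [hP]; unfold Platform
    congr 1
    ext y; simp only [mem_setOf_eq, neg_inj]
  · intro y hy; have := hc y hy; simp only at this; linarith
  · rcases hstrict with h | h
    · right; intro y hy; have := h y hy; simp only at this; linarith
    · left; intro y hy; have := h y hy; simp only at this; linarith

lemma aux_exists_turning_max {I : Set ℝ} {f : ℝ → ℝ} (hI : I.OrdConnected)
    (hIu : UniqueDiffOn ℝ I) (hf : ContDiffOn ℝ 1 f I)
    (hz : ∀ x ∈ I, ∃ ε > 0, ∀ y ∈ I, derivWithin f I y = 0 → |y - x| < ε → y = x)
    {u v : ℝ} (hu : u ∈ I) (hv : v ∈ I) (huv : u < v)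
    (h1 : 0 < derivWithin f I u) (h2 : derivWithin f I v < 0) :
    ∃ m ∈ Ioo u v, IsTurningPoint f I m := by
  have hIcc : Icc u v ⊆ I := hI.out hu hv
  have hD : ContinuousOn (derivWithin f I) (Icc u v) :=
    (hf.continuousOn_derivWithin hIu le_rfl).mono hIcc
  set N : Set ℝ := {y ∈ Icc u v | derivWithin f I y < 0} with hN
  have hvN : v ∈ N := ⟨⟨le_of_lt huv, le_rfl⟩, h2⟩
  have hNne : N.Nonempty := ⟨v, hvN⟩
  have hNbd : BddBelow N := ⟨u, fun y hy => hy.1.1⟩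
  set m := sInf N with hm
  have hScl : IsClosed (Icc u v ∩ derivWithin f I ⁻¹' Iic 0) :=
    hD.preimage_isClosed_of_isClosed isClosed_Icc isClosed_Iic
  have hmS : m ∈ Icc u v ∩ derivWithin f I ⁻¹' Iic 0 := by
    have hcl : m ∈ closure N := csInf_mem_closure hNne hNbd
    have hsb : N ⊆ Icc u v ∩ derivWithin f I ⁻¹' Iic 0 :=
      fun y hy => ⟨hy.1, le_of_lt hy.2⟩
    exact hScl.closure_subset ((closure_mono hsb) hcl)
  have hmuv : m ∈ Icc u v := hmS.1
  have hmle : derivWithin f I m ≤ 0 := hmS.2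
  have cont_at : ∀ w ∈ Icc u v, ∀ ε > 0, ∃ δ > 0, ∀ y ∈ Icc u v,
      |y - w| < δ → |derivWithin f I y - derivWithin f I w| < ε := by
    intro w hw ε hε
    have hcw := hD w hw
    rw [Metric.continuousWithinAt_iff] at hcw
    obtain ⟨δ, hδ, hδ'⟩ := hcw ε hε
    refine ⟨δ, hδ, fun y hy hy' => ?_⟩
    have := hδ' hy (by simpa [Real.dist_eq] using hy')
    simpa [Real.dist_eq] using this
  obtain ⟨δ₁, hδ₁, hδ₁'⟩ := cont_at u (left_mem_Icc.mpr huv.le) (derivWithin f I u) h1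
  have hposleft : ∀ y ∈ Icc u v, |y - u| < δ₁ → 0 < derivWithin f I y := by
    intro y hy hy'
    have h := abs_lt.mp (hδ₁' y hy hy')
    linarith [h.1]
  have hum : u < m := by
    have hlb : ∀ y ∈ N, u + δ₁ ≤ y := by
      intro y hy
      by_contra hlt
      push_neg at hlt
      have habs : |y - u| < δ₁ := by
        rw [abs_lt]
        constructor
        · linarith [hy.1.1]
        · linarith
      have := hposleft y hy.1 habs
      linarith [hy.2]
    linarith [le_csInf hNne hlb]
  obtain ⟨δ₂, hδ₂, hδ₂'⟩ := cont_at v (right_mem_Icc.mpr huv.le) (-derivWithin f I v) (by linarith)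
  have hnegright : ∀ y ∈ Icc u v, |y - v| < δ₂ → derivWithin f I y < 0 := by
    intro y hy hy'
    have h := abs_lt.mp (hδ₂' y hy hy')
    linarith [h.2]
  have hmv : m < v := by
    set y := max (v - δ₂ / 2) ((u + v) / 2) with hy
    have hyv : y < v := max_lt (by linarith) (by linarith)
    have hyu : u < y := lt_of_lt_of_le (by linarith) (le_max_right _ _)
    have hyIcc : y ∈ Icc u v := ⟨hyu.le, hyv.le⟩
    have hyN : y ∈ N := by
      refine ⟨hyIcc, hnegright y hyIcc ?_⟩
      rw [abs_lt]
      constructor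
      · have := le_max_left (v - δ₂/2) ((u+v)/2); linarith
      · linarith
    exact lt_of_le_of_lt (csInf_le hNbd hyN) hyv
  have hFm : derivWithin f I m = 0 := by
    rcases eq_or_lt_of_le hmle with h | h
    · exact h
    · exfalso
      obtain ⟨δ₃, hδ₃, hδ₃'⟩ := cont_at m hmuv (-derivWithin f I m) (by linarith)
      have hnegnear : ∀ y ∈ Icc u v, |y - m| < δ₃ → derivWithin f I y < 0 := by
        intro y hy hy'
        have h4 := abs_lt.mp (hδ₃' y hy hy')
        linarith [h4.2]
      set y := max (m - δ₃ / 2) ((u + m) / 2) with hy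
      have hym : y < m := max_lt (by linarith) (by linarith)
      have hyu : u < y := lt_of_lt_of_le (by linarith) (le_max_right _ _)
      have hyIcc : y ∈ Icc u v := ⟨hyu.le, le_trans hym.le hmuv.2⟩
      have hyN : y ∈ N := by
        refine ⟨hyIcc, hnegnear y hyIcc ?_⟩
        rw [abs_lt]
        constructor
        · have := le_max_left (m - δ₃/2) ((u+m)/2); linarith
        · linarith
      have := csInf_le hNbd hyN
      linarith
  have hmI : m ∈ I := hIcc hmuv
  obtain ⟨ε₀, hε₀, hiso⟩ := hz m hmI
  set ε := min ε₀ (min (m - u) (v - m)) with hε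
  have hεpos : 0 < ε := lt_min hε₀ (lt_min (by linarith) (by linarith))
  have hεu : u ≤ m - ε := by
    have : ε ≤ m - u := le_trans (min_le_right _ _) (min_le_left _ _)
    linarith
  have hεv : m + ε ≤ v := by
    have : ε ≤ v - m := le_trans (min_le_right _ _) (min_le_right _ _)
    linarith
  have hεε₀ : ε ≤ ε₀ := min_le_left _ _
  have hsubI : Ioo (m - ε) (m + ε) ⊆ I := fun y hy =>
    hIcc ⟨by linarith [hy.1], by linarith [hy.2]⟩
  have hposL : ∀ y ∈ Ioo (m - ε) m, 0 < derivWithin f I y := by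
    intro y hy
    have hyI : y ∈ Icc u v := ⟨by linarith [hy.1], by linarith [hy.2, hmuv.2]⟩
    have hyne : derivWithin f I y ≠ 0 := by
      intro h0
      have : y = m := hiso y (hIcc hyI) h0 (by
        rw [abs_lt]
        constructor
        · linarith [hy.1]
        · linarith [hy.2, hε₀, hεpos])
      exact (ne_of_lt hy.2) this
    have hynotN : y ∉ N := fun hyN => absurd (csInf_le hNbd hyN) (not_le.mpr hy.2)
    rcases lt_trichotomy (derivWithin f I y) 0 with h | h | h
    · exact absurd (⟨hyI, h⟩ : y ∈ N) hynotN
    · exact absurd h hyne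
    · exact h
  have hnegR : ∀ y ∈ Ioo m (m + ε), derivWithin f I y < 0 := by
    intro y hy
    have hyI : y ∈ Icc u v := ⟨by linarith [hy.1, hmuv.1], by linarith [hy.2]⟩
    have hyne : derivWithin f I y ≠ 0 := by
      intro h0
      have : y = m := hiso y (hIcc hyI) h0 (by
        rw [abs_lt]
        constructor
        · linarith [hy.1, hε₀, hεpos]
        · linarith [hy.2])
      exact (ne_of_gt hy.1) this
    rcases lt_trichotomy (derivWithin f I y) 0 with h | h | h
    · exact h
    · exact absurd h hyne
    · exfalso
      obtain ⟨z, hzN, hzy⟩ := exists_lt_of_csInf_lt hNne hy.1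
      have hmz : m < z := by
        rcases eq_or_lt_of_le (csInf_le hNbd hzN) with heq | hlt
        · exfalso; rw [← heq] at hzN; linarith [hzN.2]
        · exact hlt
      have hcz : ContinuousOn (derivWithin f I) (Icc z y) := hD.mono (fun t ht =>
        ⟨le_trans hmuv.1 (le_trans hmz.le ht.1), le_trans ht.2 (by linarith [hy.2])⟩)
      have h0mem : (0:ℝ) ∈ Ioo (derivWithin f I z) (derivWithin f I y) := ⟨hzN.2, h⟩
      obtain ⟨w, hw, hFw⟩ := intermediate_value_Ioo hzy.le hcz h0mem
      have hwI : w ∈ I := hsubI ⟨by linarith [hw.1, hmz], by linarith [hw.2, hy.2]⟩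
      have hwm : w = m := hiso w hwI hFw (by
        rw [abs_lt]
        constructor
        · linarith [hw.1, hmz, hεpos, hε₀]
        · linarith [hw.2, hy.2, hεε₀])
      linarith [hw.1, hmz]
  have hfc : ContinuousOn f I := hf.continuousOn
  have hmεI : m - ε ∈ I := hIcc ⟨hεu, by linarith [hmuv.2]⟩
  have hpεI : m + ε ∈ I := hIcc ⟨by linarith [hmuv.1], hεv⟩
  have hsub' : Icc (m - ε) (m + ε) ⊆ I := hI.out hmεI hpεI
  have hmonoL : StrictMonoOn f (Ioc (m - ε) m) := by
    apply strictMonoOn_of_deriv_pos (convex_Ioc _ _)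
      (hfc.mono (fun t ht => hsub' ⟨ht.1.le, le_trans ht.2 (by linarith)⟩))
    intro t ht
    rw [interior_Ioc] at ht
    have hmem : I ∈ nhds t := aux_mem_nhds_of_Ioo hI hmεI hmI ht
    rw [← derivWithin_of_mem_nhds hmem]
    exact hposL t ht
  have hmonoR : StrictAntiOn f (Ico m (m + ε)) := by
    apply strictAntiOn_of_deriv_neg (convex_Ico _ _)
      (hfc.mono (fun t ht => hsub' ⟨by linarith [ht.1], ht.2.le⟩))
    intro t ht
    rw [interior_Ico] at ht
    have hmem : I ∈ nhds t := aux_mem_nhds_of_Ioo hI hmI hpεI ht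
    rw [← derivWithin_of_mem_nhds hmem]
    exact hnegR t ht
  have hlt : ∀ y ∈ Ioo (m - ε) (m + ε), y ≠ m → f y < f m := by
    intro y hy hne
    rcases lt_or_gt_of_ne hne with h | h
    · exact hmonoL ⟨hy.1, h.le⟩ ⟨by linarith, le_rfl⟩ h
    · exact hmonoR ⟨le_rfl, by linarith⟩ ⟨h.le, hy.2⟩ h
  have hPm : Platform f I m = {m} := by
    unfold Platform
    apply Subset.antisymm
    · intro y hy
      by_contra hne
      simp only [mem_singleton_iff] at hne
      have hOrd : (connectedComponentIn {x ∈ I | f x = f m} m).OrdConnected :=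
        (isPreconnected_connectedComponentIn).ordConnected
      have hmmem : m ∈ connectedComponentIn {x ∈ I | f x = f m} m :=
        mem_connectedComponentIn ⟨hmI, rfl⟩
      rcases lt_or_gt_of_ne hne with h | h
      · set t := max y (m - ε / 2) with ht
        have htmem : t ∈ connectedComponentIn {x ∈ I | f x = f m} m :=
          hOrd.out hy hmmem ⟨le_max_left _ _, max_le h.le (by linarith)⟩
        have htS : t ∈ {x ∈ I | f x = f m} := connectedComponentIn_subset _ _ htmem
        have htIoo : t ∈ Ioo (m - ε) (m + ε) := by
          constructor
          · exact lt_of_lt_of_le (by linarith) (le_max_right _ _)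
          · have : t ≤ m := max_le h.le (by linarith)
            linarith
        have htne : t ≠ m := ne_of_lt (max_lt h (by linarith))
        exact absurd htS.2 (ne_of_lt (hlt t htIoo htne))
      · set t := min y (m + ε / 2) with ht
        have htmem : t ∈ connectedComponentIn {x ∈ I | f x = f m} m :=
          hOrd.out hmmem hy ⟨le_min h.le (by linarith), min_le_left _ _⟩
        have htS : t ∈ {x ∈ I | f x = f m} := connectedComponentIn_subset _ _ htmem
        have htIoo : t ∈ Ioo (m - ε) (m + ε) := by
          constructor
          · have : m ≤ t := le_min h.le (by linarith)
            linarith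
          · exact lt_of_le_of_lt (min_le_right _ _) (by linarith)
        have htne : t ≠ m := ne_of_gt (lt_min h (by linarith))
        exact absurd htS.2 (ne_of_lt (hlt t htIoo htne))
    · intro y hy
      rw [mem_singleton_iff.mp hy]
      exact mem_connectedComponentIn ⟨hmI, rfl⟩
  refine ⟨m, ⟨hum, hmv⟩, Platform f I m,
    ⟨⟨m, hmI, rfl⟩, m, m, f m, ε, le_rfl, ?_, ?_, hεpos, hsubI, ?_⟩, ?_⟩
  · rw [hPm, Icc_self]
  · intro x hx
    rw [hPm, mem_singleton_iff] at hx
    rw [hx]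
  · right
    intro x hx
    rw [hPm] at hx
    exact hlt x hx.1 (by simpa using hx.2)
  · rw [hPm]; exact mem_singleton m

lemma aux_exists_turning_min {I : Set ℝ} {f : ℝ → ℝ} (hI : I.OrdConnected)
    (hIu : UniqueDiffOn ℝ I) (hf : ContDiffOn ℝ 1 f I)
    (hz : ∀ x ∈ I, ∃ ε > 0, ∀ y ∈ I, derivWithin f I y = 0 → |y - x| < ε → y = x)
    {u v : ℝ} (hu : u ∈ I) (hv : v ∈ I) (huv : u < v)
    (h1 : derivWithin f I u < 0) (h2 : 0 < derivWithin f I v) :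
    ∃ m ∈ Ioo u v, IsTurningPoint f I m := by
  have hneg : ∀ y ∈ I, derivWithin (fun x => -f x) I y = -derivWithin f I y :=
    fun y hy => derivWithin.fun_neg
  obtain ⟨m, hm, ht⟩ := aux_exists_turning_max hI hIu hf.neg
    (fun x hx => by
      obtain ⟨ε, hε, h⟩ := hz x hx
      exact ⟨ε, hε, fun y hy h0 hd => h y hy (by rw [hneg y hy] at h0; linarith) hd⟩)
    hu hv huv (by rw [hneg u hu]; linarith) (by rw [hneg v hv]; linarith)
  exact ⟨m, hm, aux_isTurningPoint_of_neg ht⟩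

/-- If the zero set of `Df` is closed discrete in `I` and `Df`, `Dg` have the
same sign everywhere on `I`, then `g` is comonotone with `f` with the set of
turning points of `f` as witnessing set. -/
theorem comonotone_of_deriv_same_sign
    (I : Set ℝ) (hI : I.OrdConnected) (hnt : I.Nontrivial)
    (f g : ℝ → ℝ) (hf : ContDiffOn ℝ 1 f I) (hg : ContDiffOn ℝ 1 g I)
    (hz : ClosedDiscreteIn {x ∈ I | derivWithin f I x = 0} I)
    (hsign : ∀ x ∈ I,
      (0 < derivWithin f I x ∧ 0 < derivWithin g I x) ∨
      (derivWithin f I x < 0 ∧ derivWithin g I x < 0) ∨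
      (derivWithin f I x = 0 ∧ derivWithin g I x = 0)) :
    ClosedDiscreteIn {x | IsTurningPoint f I x} I ∧
    ∀ x ∈ I \ {x | IsTurningPoint f I x},
      (MonotoneOn f (connectedComponentIn (I \ {x | IsTurningPoint f I x}) x) ∧
       MonotoneOn g (connectedComponentIn (I \ {x | IsTurningPoint f I x}) x)) ∨
      (AntitoneOn f (connectedComponentIn (I \ {x | IsTurningPoint f I x}) x) ∧
       AntitoneOn g (connectedComponentIn (I \ {x | IsTurningPoint f I x}) x)) := by
  obtain ⟨a0, ha0, b0, hb0, hab0⟩ := hnt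
  have hIconv : Convex ℝ I := convex_iff_ordConnected.mpr hI
  have hIint : (interior I).Nonempty := by
    rcases lt_or_gt_of_ne hab0 with h | h
    · exact ⟨(a0 + b0) / 2, (isOpen_Ioo.subset_interior_iff.mpr
        (Ioo_subset_Icc_self.trans (hI.out ha0 hb0))) ⟨by linarith, by linarith⟩⟩
    · exact ⟨(a0 + b0) / 2, (isOpen_Ioo.subset_interior_iff.mpr
        (Ioo_subset_Icc_self.trans (hI.out hb0 ha0))) ⟨by linarith, by linarith⟩⟩
  have hIu : UniqueDiffOn ℝ I := uniqueDiffOn_convex hIconv hIint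
  have hz' : ∀ x ∈ I, ∃ ε > 0, ∀ y ∈ I, derivWithin f I y = 0 → |y - x| < ε → y = x := by
    intro x hx
    obtain ⟨ε, hε, h⟩ := hz.2 x hx
    exact ⟨ε, hε, fun y hy h0 hd => h y ⟨hy, h0⟩ hd⟩
  have hKZ : ∀ x, IsTurningPoint f I x → x ∈ I ∧ derivWithin f I x = 0 := by
    intro x hx
    obtain ⟨P, ⟨⟨p, hp, hPdef⟩, a, b, c, ε, hab, hPab, hc, hε, hsub, hstrict⟩, hxP⟩ := hx
    have hxab : x ∈ Icc a b := by rw [hPab] at hxP; exact hxP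
    have hxI : x ∈ I := hsub ⟨by linarith [hxab.1], by linarith [hxab.2]⟩
    refine ⟨hxI, ?_⟩
    rcases eq_or_lt_of_le hab with heq | hlt
    · subst heq
      have hxa : x = a := le_antisymm hxab.2 hxab.1
      subst hxa
      have hmem : I ∈ nhds x := Filter.mem_of_superset
        (Ioo_mem_nhds (by linarith) (by linarith)) hsub
      rw [derivWithin_of_mem_nhds hmem]
      have hfa : f x = c := hc x (by rw [hPab]; exact ⟨le_rfl, le_rfl⟩)
      have hIoo : Ioo (x - ε) (x + ε) ∈ nhds x := Ioo_mem_nhds (by linarith) (by linarith)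
      rcases hstrict with h | h
      · apply IsLocalMin.deriv_eq_zero
        apply Filter.eventually_of_mem hIoo
        intro y hy
        by_cases hya : y = x
        · rw [hya]
        · have hyP : y ∉ P := by
            rw [hPab, Icc_self, mem_singleton_iff]
            exact hya
          have := h y ⟨hy, hyP⟩
          linarith
      · apply IsLocalMax.deriv_eq_zero
        apply Filter.eventually_of_mem hIoo
        intro y hy
        by_cases hya : y = x
        · rw [hya]
        · have hyP : y ∉ P := by
            rw [hPab, Icc_self, mem_singleton_iff]
            exact hya
          have := h y ⟨hy, hyP⟩
          linarith
    · exfalso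
      set q := (a + b) / 2 with hq
      have hqI : q ∈ I := hsub ⟨by linarith, by linarith⟩
      obtain ⟨ε₁, hε₁, hiso⟩ := hz' q hqI
      have hymin : 0 < min ((b - a) / 4) (ε₁ / 2) := lt_min (by linarith) (by linarith)
      set y := q + min ((b - a) / 4) (ε₁ / 2) with hy
      have hyq : q < y := by rw [hy]; linarith
      have hyb : y < b := by
        have := min_le_left ((b - a) / 4) (ε₁ / 2)
        rw [hy, hq]; linarith
      have hya : a < y := by rw [hy, hq]; linarith
      have hyab : y ∈ Ioo a b := ⟨hya, hyb⟩
      have hyI : y ∈ I := hsub ⟨by linarith, by linarith⟩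
      have hymem : I ∈ nhds y := Filter.mem_of_superset
        (Ioo_mem_nhds (by linarith) (by linarith)) hsub
      have hFy : derivWithin f I y = 0 := by
        rw [derivWithin_of_mem_nhds hymem]
        have hconst : f =ᶠ[nhds y] fun _ => c := by
          apply Filter.eventually_of_mem (Ioo_mem_nhds hyab.1 hyab.2)
          intro t ht
          exact hc t (by rw [hPab]; exact Ioo_subset_Icc_self ht)
        rw [hconst.deriv_eq]
        exact deriv_const y c
      have heq : y = q := hiso y hyI hFy (by
        rw [abs_lt]
        constructor
        · linarith
        · have := min_le_right ((b - a) / 4) (ε₁ / 2)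
          rw [hy]; linarith)
      exact absurd heq (ne_of_gt hyq)
  have hKsub : {x | IsTurningPoint f I x} ⊆ I := fun x hx => (hKZ x hx).1
  constructor
  · refine ⟨hKsub, fun x hx => ?_⟩
    obtain ⟨ε, hε, h⟩ := hz' x hx
    exact ⟨ε, hε, fun y hy hd => h y (hKZ y hy).1 (hKZ y hy).2 hd⟩
  intro x hx
  set K := {x | IsTurningPoint f I x} with hK
  set C := connectedComponentIn (I \ K) x with hC
  have hCsub : C ⊆ I \ K := connectedComponentIn_subset _ _
  have hCI : C ⊆ I := fun y hy => (hCsub hy).1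
  have hCord : C.OrdConnected := (isPreconnected_connectedComponentIn).ordConnected
  have hCconv : Convex ℝ C := convex_iff_ordConnected.mpr hCord
  have key : (∀ y ∈ C, 0 ≤ derivWithin f I y) ∨ (∀ y ∈ C, derivWithin f I y ≤ 0) := by
    by_cases hex : ∃ y ∈ C, derivWithin f I y < 0
    · right
      obtain ⟨y₀, hy₀C, hy₀⟩ := hex
      intro z hzC
      by_contra hpos
      push_neg at hpos
      have hzI : z ∈ I := hCI hzC
      have hy₀I : y₀ ∈ I := hCI hy₀C
      rcases lt_trichotomy z y₀ with h | h | h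
      · obtain ⟨m, hm, ht⟩ := aux_exists_turning_max hI hIu hf hz' hzI hy₀I h hpos hy₀
        have hmC : m ∈ C := hCord.out hzC hy₀C ⟨hm.1.le, hm.2.le⟩
        exact (hCsub hmC).2 ht
      · rw [h] at hpos; linarith
      · obtain ⟨m, hm, ht⟩ := aux_exists_turning_min hI hIu hf hz' hy₀I hzI h hy₀ hpos
        have hmC : m ∈ C := hCord.out hy₀C hzC ⟨hm.1.le, hm.2.le⟩
        exact (hCsub hmC).2 ht
    · left
      push_neg at hex
      exact hex
  have keyg : ∀ y ∈ C, 0 ≤ derivWithin f I y → 0 ≤ derivWithin g I y := by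
    intro y hy h
    rcases hsign y (hCI hy) with ⟨_, h2⟩ | ⟨hneg, _⟩ | ⟨_, h2⟩
    · exact h2.le
    · linarith
    · exact h2.ge
  have keyg' : ∀ y ∈ C, derivWithin f I y ≤ 0 → derivWithin g I y ≤ 0 := by
    intro y hy h
    rcases hsign y (hCI hy) with ⟨hpos, _⟩ | ⟨_, h2⟩ | ⟨_, h2⟩
    · linarith
    · exact h2.le
    · exact h2.le
  have hmono : ∀ h : ℝ → ℝ, ContDiffOn ℝ 1 h I → (∀ y ∈ C, 0 ≤ derivWithin h I y) →
      MonotoneOn h C := by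
    intro h hh hsgn
    apply monotoneOn_of_deriv_nonneg hCconv (hh.continuousOn.mono hCI)
    · intro y hy
      have hyintI : y ∈ interior I := interior_mono hCI hy
      have hmem : I ∈ nhds y := mem_interior_iff_mem_nhds.mp hyintI
      exact ((hh.differentiableOn one_ne_zero y (interior_subset hyintI)).differentiableAt
        hmem).differentiableWithinAt
    · intro y hy
      have hyintI : y ∈ interior I := interior_mono hCI hy
      have hmem : I ∈ nhds y := mem_interior_iff_mem_nhds.mp hyintI
      rw [← derivWithin_of_mem_nhds hmem]
      exact hsgn y (interior_subset hy)
  have hanti : ∀ h : ℝ → ℝ, ContDiffOn ℝ 1 h I → (∀ y ∈ C, derivWithin h I y ≤ 0) →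
      AntitoneOn h C := by
    intro h hh hsgn
    apply antitoneOn_of_deriv_nonpos hCconv (hh.continuousOn.mono hCI)
    · intro y hy
      have hyintI : y ∈ interior I := interior_mono hCI hy
      have hmem : I ∈ nhds y := mem_interior_iff_mem_nhds.mp hyintI
      exact ((hh.differentiableOn one_ne_zero y (interior_subset hyintI)).differentiableAt
        hmem).differentiableWithinAt
    · intro y hy
      have hyintI : y ∈ interior I := interior_mono hCI hy
      have hmem : I ∈ nhds y := mem_interior_iff_mem_nhds.mp hyintI
      rw [← derivWithin_of_mem_nhds hmem]
      exact hsgn y (interior_subset hy)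
  rcases key with h | h
  · exact Or.inl ⟨hmono f hf h, hmono g hg (fun y hy => keyg y hy (h y hy))⟩
  · exact Or.inr ⟨hanti f hf h, hanti g hg (fun y hy => keyg' y hy (h y hy))⟩
end

section
/- Let K be a witnessing set for a piecewise monotone continuous function f on a nontrivial interval I (i.e., K is closed discrete in I and f is monotone on each component of I \ K). Then: (a) K is a ⊆-minimal witnessing set if and only if every point of K is a turning point of f and K has exactly one point on each turning platform of f; (b) K contains a ⊆-minimal witnessing set. -/
open Set MeasureTheory

/-- `K` is a `⊆`-minimal witnessing set for `f` on `I`. -/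
def MinimalWitness (f : ℝ → ℝ) (I K : Set ℝ) : Prop :=
  Witnesses f I K ∧ ∀ K' ⊆ K, Witnesses f I K' → K' = K


section Aux

variable {f : ℝ → ℝ} {I K : Set ℝ}

lemma discrete_finite (hK : ClosedDiscreteIn K I) {a b : ℝ} (hab : Icc a b ⊆ I) :
    (K ∩ Icc a b).Finite := by
  obtain ⟨hKI, hdisc⟩ := hK
  choose! ε hε hsep using hdisc
  have hcov : Icc a b ⊆ ⋃ x ∈ Icc a b, Metric.ball x (ε x) := fun x hx =>
    mem_biUnion hx (Metric.mem_ball_self (hε x (hab hx)))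
  obtain ⟨t, hts, htfin, hcov'⟩ := isCompact_Icc.elim_finite_subcover_image
    (fun x _ => Metric.isOpen_ball) hcov
  refine (htfin.subset ?_ : (K ∩ Icc a b).Finite)
  rintro y ⟨hyK, hyI⟩
  obtain ⟨x, hxt, hxy⟩ := mem_iUnion₂.mp (hcov' hyI)
  have : y = x := hsep x (hab (hts hxt)) y hyK (by simpa [Real.dist_eq] using hxy)
  simpa [this] using hxt

lemma platform_eq {P : Set ℝ} (hP : IsPlatform f I P) {x : ℝ} (hx : x ∈ P) :
    P = Platform f I x := by
  obtain ⟨p, hpI, rfl⟩ := hP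
  have hfx : f x = f p := ((connectedComponentIn_subset _ _) hx).2
  have hset : {y ∈ I | f y = f p} = {y ∈ I | f y = f x} := by rw [hfx]
  show connectedComponentIn {y ∈ I | f y = f p} p = connectedComponentIn {y ∈ I | f y = f x} x
  rw [← hset]
  exact connectedComponentIn_eq hx

lemma platform_subset {p : ℝ} : Platform f I p ⊆ I := by
  exact (connectedComponentIn_subset _ _).trans (fun x hx => hx.1)

lemma exists_gap_left {T : Set ℝ} (hT : T.Finite) {a u : ℝ} (hua : u < a) :
    ∃ δ > 0, u ≤ a - δ ∧ ∀ y ∈ T, y ∉ Ioo (a - δ) a := by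
  rcases eq_empty_or_nonempty (T ∩ Ioo u a) with he | hne
  · refine ⟨a - u, by linarith, by linarith, fun y hyT hy => ?_⟩
    have hy' : y ∈ T ∩ Ioo u a := ⟨hyT, by constructor <;> [linarith [hy.1]; exact hy.2]⟩
    simp [he] at hy'
  · obtain ⟨m, hm, hmax⟩ := Set.exists_max_image _ id (hT.inter_of_left _) hne
    have hm1 : u < m := hm.2.1
    have hm2 : m < a := hm.2.2
    refine ⟨a - m, by linarith, by linarith, fun y hyT hy => ?_⟩
    have : y ≤ m := hmax y ⟨hyT, by linarith [hy.1], by linarith [hy.2, hm2]⟩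
    have : m < y := by linarith [hy.1]
    linarith

lemma exists_gap_right {T : Set ℝ} (hT : T.Finite) {b w : ℝ} (hbw : b < w) :
    ∃ δ > 0, b + δ ≤ w ∧ ∀ y ∈ T, y ∉ Ioo b (b + δ) := by
  rcases eq_empty_or_nonempty (T ∩ Ioo b w) with he | hne
  · refine ⟨w - b, by linarith, by linarith, fun y hyT hy => ?_⟩
    have hy' : y ∈ T ∩ Ioo b w := ⟨hyT, hy.1, by linarith [hy.2]⟩
    simp [he] at hy'
  · obtain ⟨m, hm, hmin⟩ := Set.exists_min_image _ id (hT.inter_of_left _) hne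
    have hm1 : b < m := hm.2.1
    have hm2 : m < w := hm.2.2
    refine ⟨m - b, by linarith, by linarith, fun y hyT hy => ?_⟩
    have : m ≤ y := hmin y ⟨hyT, hy.1, by linarith [hy.2, hm2]⟩
    have : y < m := by linarith [hy.2]
    linarith

lemma witnesses_neg (hK : Witnesses f I K) : Witnesses (fun x => -f x) I K := by
  refine ⟨hK.1, fun x hx => ?_⟩
  rcases hK.2 x hx with h | h
  · exact Or.inr (fun a ha b hb hab => by simpa using h ha hb hab)
  · exact Or.inl (fun a ha b hb hab => by simpa using h ha hb hab)

lemma turning_neg {P : Set ℝ} (h : IsTurningPlatform (fun x => -f x) I P) :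
    IsTurningPlatform f I P := by
  obtain ⟨⟨p, hpI, hP⟩, a, b, c, ε, hab, hPab, hconst, hε, hsub, hbr⟩ := h
  have hset : {x ∈ I | f x = f p} = {x ∈ I | -f x = -f p} := by
    ext x; simp [neg_inj]
  refine ⟨⟨p, hpI, ?_⟩, a, b, -c, ε, hab, hPab,
    fun x hx => by have := hconst x hx; simp at this ⊢; linarith, hε, hsub, ?_⟩
  · rw [hP]
    show connectedComponentIn {x ∈ I | -f x = -f p} p = connectedComponentIn {x ∈ I | f x = f p} p
    rw [hset]
  · rcases hbr with h1 | h1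
    · right; intro x hx; have := h1 x hx; simp at this; linarith
    · left; intro x hx; have := h1 x hx; simp at this; linarith

lemma peak_turning (hI : I.OrdConnected) (hcont : ContinuousOn f I)
    (hK : Witnesses f I K) {u v w : ℝ} (hu : u ∈ I) (hw : w ∈ I)
    (huv : u < v) (hvw : v < w) (hfu : f u < f v) (hfw : f w < f v) :
    ∃ P, IsTurningPlatform f I P ∧ P ⊆ Ioo u w := by
  have hIcc : Icc u w ⊆ I := hI.out hu hw
  have hcont' : ContinuousOn f (Icc u w) := hcont.mono hIcc
  have hv' : v ∈ Icc u w := ⟨huv.le, hvw.le⟩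
  obtain ⟨p, hp, hmax⟩ := isCompact_Icc.exists_isMaxOn ⟨v, hv'⟩ hcont'
  have hmax' : ∀ y ∈ Icc u w, f y ≤ f p := fun y hy => hmax hy
  set c := f p with hc
  have hvc : f v ≤ c := hmax' v hv'
  have hpu : u < p := by
    rcases eq_or_lt_of_le hp.1 with h | h
    · exfalso
      have : f u = c := by rw [h]
      linarith
    · exact h
  have hpw : p < w := by
    rcases eq_or_lt_of_le hp.2 with h | h
    · exfalso
      have : f w = c := by rw [← h]
      linarith
    · exact h
  set S := {x ∈ I | f x = f p} with hS
  set P := connectedComponentIn S p with hP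
  have hpS : p ∈ S := ⟨hIcc hp, rfl⟩
  have hPS : P ⊆ S := connectedComponentIn_subset _ _
  have hpP : p ∈ P := mem_connectedComponentIn hpS
  have hPoc : P.OrdConnected := isPreconnected_connectedComponentIn.ordConnected
  have hPuw : P ⊆ Ioo u w := by
    intro q hq
    constructor
    · by_contra h
      push_neg at h
      have huP : u ∈ P := hPoc.out hq hpP ⟨h, hpu.le⟩
      have := (hPS huP).2
      linarith
    · by_contra h
      push_neg at h
      have hwP : w ∈ P := hPoc.out hpP hq ⟨hpw.le, h⟩
      have := (hPS hwP).2
      linarith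
  have hPne : P.Nonempty := ⟨p, hpP⟩
  have hbdd1 : BddBelow P := ⟨u, fun x hx => (hPuw hx).1.le⟩
  have hbdd2 : BddAbove P := ⟨w, fun x hx => (hPuw hx).2.le⟩
  set a := sInf P with ha
  set b := sSup P with hb
  have hap : a ≤ p := csInf_le hbdd1 hpP
  have hpb : p ≤ b := le_csSup hbdd2 hpP
  have hSclosed : IsClosed {x ∈ Icc u w | f x = c} := by
    exact hcont'.preimage_isClosed_of_isClosed isClosed_Icc (isClosed_singleton (x := c))
  have hPsub' : P ⊆ {x ∈ Icc u w | f x = c} := fun x hx =>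
    ⟨⟨(hPuw hx).1.le, (hPuw hx).2.le⟩, (hPS hx).2⟩
  have haS : a ∈ {x ∈ Icc u w | f x = c} :=
    hSclosed.closure_subset ((closure_mono hPsub') (csInf_mem_closure hPne hbdd1))
  have hbS : b ∈ {x ∈ Icc u w | f x = c} :=
    hSclosed.closure_subset ((closure_mono hPsub') (csSup_mem_closure hPne hbdd2))
  have hIooP : Ioo a b ⊆ P := by
    intro t ht
    obtain ⟨p₁, hp₁, h₁⟩ := exists_lt_of_csInf_lt hPne ht.1
    obtain ⟨p₂, hp₂, h₂⟩ := exists_lt_of_lt_csSup hPne ht.2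
    exact hPoc.out hp₁ hp₂ ⟨h₁.le, h₂.le⟩
  have hIab : Icc a b ⊆ S := by
    intro t ht
    rcases eq_or_lt_of_le ht.1 with h1 | h1
    · rw [← h1]; exact ⟨hIcc haS.1, haS.2⟩
    rcases eq_or_lt_of_le ht.2 with h2 | h2
    · rw [h2]; exact ⟨hIcc hbS.1, hbS.2⟩
    · exact hPS (hIooP ⟨h1, h2⟩)
  have hPab : P = Icc a b := by
    apply Subset.antisymm (fun x hx => mem_Icc.mpr ⟨csInf_le hbdd1 hx, le_csSup hbdd2 hx⟩)
    exact isPreconnected_Icc.subset_connectedComponentIn (mem_Icc.mpr ⟨hap, hpb⟩) hIab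
  have hab : a ≤ b := hap.trans hpb
  have haP : a ∈ P := by rw [hPab]; exact ⟨le_refl a, hab⟩
  have hbP : b ∈ P := by rw [hPab]; exact ⟨hab, le_refl b⟩
  have hauw : a ∈ Ioo u w := hPuw haP
  have hbuw : b ∈ Ioo u w := hPuw hbP
  have hfin : (K ∩ Icc u w).Finite := discrete_finite hK.1 hIcc
  obtain ⟨δ₁, hδ₁, hδ₁', hgap₁⟩ := exists_gap_left hfin hauw.1
  obtain ⟨δ₂, hδ₂, hδ₂', hgap₂⟩ := exists_gap_right hfin hbuw.2
  have hfa : f a = c := haS.2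
  have hfb : f b = c := hbS.2
  -- no fiber points just left of a
  have hleft : ∀ x ∈ Ioo (a - δ₁) a, f x ≠ c := by
    intro x hx hfx
    have hIooI : Ioo (a - δ₁) a ⊆ I := fun y hy =>
      hIcc ⟨by linarith [hy.1], by linarith [hy.2, hauw.2]⟩
    have hIooK : Ioo (a - δ₁) a ⊆ I \ K := fun y hy =>
      ⟨hIooI hy, fun hyK => hgap₁ y
        (mem_inter hyK (mem_Icc.mpr ⟨by linarith [hy.1], by linarith [hy.2, hauw.2]⟩)) hy⟩
    have hm := hK.2 x (hIooK hx)
    have hsubc : Ioo (a - δ₁) a ⊆ connectedComponentIn (I \ K) x :=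
      isPreconnected_Ioo.subset_connectedComponentIn hx hIooK
    have hyc : ∀ y ∈ Ioo x a, f y = c := by
      intro y hy
      have hymem : y ∈ Ioo (a - δ₁) a := ⟨lt_trans hx.1 hy.1, hy.2⟩
      have hyle : f y ≤ c := hmax' y ⟨by linarith [hymem.1], by linarith [hy.2, hauw.2]⟩
      have hyge : c ≤ f y := by
        rcases hm with hM | hA
        · have := hM (hsubc hx) (hsubc hymem) hy.1.le
          rw [hfx] at this
          exact this
        · have hyaI : Ioo y a ⊆ I := fun z hz => hIooI ⟨lt_trans hymem.1 hz.1, hz.2⟩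
          have hcw : ContinuousWithinAt f (Ioo y a) a :=
            (hcont a (hIcc ⟨hauw.1.le, hauw.2.le⟩)).mono hyaI
          have htend : Filter.Tendsto f (nhdsWithin a (Ioo y a)) (nhds c) := by
            rw [← hfa]
            exact hcw.tendsto
          haveI hnb : (nhdsWithin a (Ioo y a)).NeBot := by
            rw [← mem_closure_iff_nhdsWithin_neBot, closure_Ioo (ne_of_lt hy.2)]
            exact ⟨hy.2.le, le_refl a⟩
          refine le_of_tendsto htend ?_
          filter_upwards [self_mem_nhdsWithin] with z hz
          exact hA (hsubc hymem) (hsubc ⟨lt_trans hymem.1 hz.1, hz.2⟩) hz.1.le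
      linarith
    have hxS : Icc x b ⊆ S := by
      intro t ht
      rcases lt_or_ge t a with h | h
      · rcases eq_or_lt_of_le ht.1 with h' | h'
        · rw [← h']; exact ⟨hIooI hx, hfx⟩
        · exact ⟨hIooI ⟨lt_trans hx.1 h', h⟩, hyc t ⟨h', h⟩⟩
      · exact hIab ⟨h, ht.2⟩
    have hxP : x ∈ P :=
      isPreconnected_Icc.subset_connectedComponentIn
        (⟨by linarith [hx.2], hpb⟩ : p ∈ Icc x b) hxS
        ⟨le_refl x, by linarith [hx.2]⟩
    rw [hPab] at hxP
    linarith [hxP.1, hx.2]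
  -- no fiber points just right of b
  have hright : ∀ x ∈ Ioo b (b + δ₂), f x ≠ c := by
    intro x hx hfx
    have hIooI : Ioo b (b + δ₂) ⊆ I := fun y hy =>
      hIcc ⟨by linarith [hy.1, hbuw.1], by linarith [hy.2]⟩
    have hIooK : Ioo b (b + δ₂) ⊆ I \ K := fun y hy =>
      ⟨hIooI hy, fun hyK => hgap₂ y
        (mem_inter hyK (mem_Icc.mpr ⟨by linarith [hy.1, hbuw.1], by linarith [hy.2]⟩)) hy⟩
    have hm := hK.2 x (hIooK hx)
    have hsubc : Ioo b (b + δ₂) ⊆ connectedComponentIn (I \ K) x :=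
      isPreconnected_Ioo.subset_connectedComponentIn hx hIooK
    have hyc : ∀ y ∈ Ioo b x, f y = c := by
      intro y hy
      have hymem : y ∈ Ioo b (b + δ₂) := ⟨hy.1, lt_trans hy.2 hx.2⟩
      have hyle : f y ≤ c := hmax' y ⟨by linarith [hy.1, hbuw.1], by linarith [hymem.2]⟩
      have hyge : c ≤ f y := by
        rcases hm with hM | hA
        · have hbyI : Ioo b y ⊆ I := fun z hz => hIooI ⟨hz.1, lt_trans hz.2 hymem.2⟩
          have hcw : ContinuousWithinAt f (Ioo b y) b :=
            (hcont b (hIcc ⟨hbuw.1.le, hbuw.2.le⟩)).mono hbyI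
          have htend : Filter.Tendsto f (nhdsWithin b (Ioo b y)) (nhds c) := by
            rw [← hfb]
            exact hcw.tendsto
          haveI hnb : (nhdsWithin b (Ioo b y)).NeBot := by
            rw [← mem_closure_iff_nhdsWithin_neBot, closure_Ioo (ne_of_lt hy.1)]
            exact ⟨le_refl b, hy.1.le⟩
          refine le_of_tendsto htend ?_
          filter_upwards [self_mem_nhdsWithin] with z hz
          exact hM (hsubc ⟨hz.1, lt_trans hz.2 hymem.2⟩) (hsubc hymem) hz.2.le
        · have := hA (hsubc hymem) (hsubc hx) hy.2.le
          rw [hfx] at this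
          exact this
      linarith
    have hxS : Icc a x ⊆ S := by
      intro t ht
      rcases lt_or_ge b t with h | h
      · rcases eq_or_lt_of_le ht.2 with h' | h'
        · rw [h']; exact ⟨hIooI hx, hfx⟩
        · exact ⟨hIooI ⟨h, lt_trans h' hx.2⟩, hyc t ⟨h, h'⟩⟩
      · exact hIab ⟨ht.1, h⟩
    have hxP : x ∈ P :=
      isPreconnected_Icc.subset_connectedComponentIn
        (⟨hap, by linarith [hx.1]⟩ : p ∈ Icc a x) hxS
        ⟨by linarith [hx.1], le_refl x⟩
    rw [hPab] at hxP
    linarith [hxP.2, hx.1]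
  set e := min δ₁ δ₂ with he
  have he0 : 0 < e := lt_min hδ₁ hδ₂
  have he1 : e ≤ δ₁ := min_le_left _ _
  have he2 : e ≤ δ₂ := min_le_right _ _
  refine ⟨P, ⟨⟨p, hIcc hp, rfl⟩, a, b, c, e, hab, hPab,
    fun x hx => (hPS hx).2, he0, ?_, Or.inr ?_⟩, hPuw⟩
  · intro x hx
    exact hIcc ⟨by linarith [hx.1, hδ₁', hauw.1], by linarith [hx.2, hδ₂', hbuw.2]⟩
  · intro x hx
    rw [hPab] at hx
    have hxle : f x ≤ c :=
      hmax' x ⟨by linarith [hx.1.1, hδ₁', hauw.1], by linarith [hx.1.2, hδ₂', hbuw.2]⟩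
    rcases lt_or_ge x a with h | h
    · exact lt_of_le_of_ne hxle (hleft x ⟨by linarith [hx.1.1], h⟩)
    rcases le_or_gt x b with h2 | h2
    · exact absurd ⟨h, h2⟩ hx.2
    · exact lt_of_le_of_ne hxle (hright x ⟨h2, by linarith [hx.1.2]⟩)

lemma dent_turning (hI : I.OrdConnected) (hcont : ContinuousOn f I)
    (hK : Witnesses f I K) {u v w : ℝ} (hu : u ∈ I) (hw : w ∈ I)
    (huv : u < v) (hvw : v < w)
    (hd : f u < f v ∧ f w < f v ∨ f v < f u ∧ f v < f w) :
    ∃ P, IsTurningPlatform f I P ∧ P ⊆ Ioo u w := by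
  rcases hd with ⟨h1, h2⟩ | ⟨h1, h2⟩
  · exact peak_turning hI hcont hK hu hw huv hvw h1 h2
  · obtain ⟨P, hP, hs⟩ := peak_turning (f := fun x => -f x) hI hcont.neg
      (witnesses_neg hK) hu hw huv hvw (by simpa) (by simpa)
    exact ⟨P, turning_neg hP, hs⟩

lemma turning_meets {P : Set ℝ} (hK : Witnesses f I K)
    (hP : IsTurningPlatform f I P) : (K ∩ P).Nonempty := by
  by_contra hne
  rw [not_nonempty_iff_eq_empty] at hne
  obtain ⟨hPl, a, b, c, ε, hab, hPab, hconst, hε, hsub, hbr⟩ := hP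
  have hIcc : Icc (a - ε/2) (b + ε/2) ⊆ I := fun x hx =>
    hsub ⟨by linarith [hx.1], by linarith [hx.2]⟩
  have hfin : (K ∩ Icc (a - ε/2) (b + ε/2)).Finite := discrete_finite hK.1 hIcc
  obtain ⟨δ₁, hδ₁, hδ₁', hgap₁⟩ := exists_gap_left hfin (show a - ε/2 < a by linarith)
  obtain ⟨δ₂, hδ₂, hδ₂', hgap₂⟩ := exists_gap_right hfin (show b < b + ε/2 by linarith)
  set e := min δ₁ δ₂ with he
  have he0 : 0 < e := lt_min hδ₁ hδ₂
  have he1 : e ≤ δ₁ := min_le_left _ _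
  have he2 : e ≤ δ₂ := min_le_right _ _
  have hee : e ≤ ε/2 := by linarith
  have hKe : ∀ y ∈ K, y ∉ Ioo (a - e) (b + e) := by
    intro y hyK hy
    rcases lt_or_ge y a with h | h
    · exact hgap₁ y ⟨hyK, ⟨by linarith [hy.1], by linarith⟩⟩ ⟨by linarith [hy.1], h⟩
    rcases le_or_gt y b with h2 | h2
    · have : y ∈ K ∩ P := ⟨hyK, by rw [hPab]; exact ⟨h, h2⟩⟩
      rw [hne] at this
      exact this
    · exact hgap₂ y ⟨hyK, ⟨by linarith, by linarith [hy.2]⟩⟩ ⟨h2, by linarith [hy.2]⟩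
  have hIoo : Ioo (a - e) (b + e) ⊆ I \ K := fun y hy =>
    ⟨hsub ⟨by linarith [hy.1], by linarith [hy.2]⟩, fun hyK => hKe y hyK hy⟩
  have haP : a ∈ P := by rw [hPab]; exact ⟨le_refl a, hab⟩
  have haI : a ∈ I := by
    obtain ⟨p, hpI, rfl⟩ := hPl
    exact platform_subset haP
  have haIoo : a ∈ Ioo (a - e) (b + e) := ⟨by linarith, by linarith⟩
  have hcomp := hK.2 a (hIoo haIoo)
  have hsubc : Ioo (a - e) (b + e) ⊆ connectedComponentIn (I \ K) a :=
    isPreconnected_Ioo.subset_connectedComponentIn haIoo hIoo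
  have hm1 : a - e/2 ∈ Ioo (a - e) (b + e) := ⟨by linarith, by linarith⟩
  have hm2 : b + e/2 ∈ Ioo (a - e) (b + e) := ⟨by linarith, by linarith⟩
  have hd1 : a - e/2 ∈ Ioo (a - ε) (b + ε) \ P := by
    rw [hPab]
    exact ⟨⟨by linarith, by linarith⟩, fun hc => by linarith [hc.1]⟩
  have hd2 : b + e/2 ∈ Ioo (a - ε) (b + ε) \ P := by
    rw [hPab]
    exact ⟨⟨by linarith, by linarith⟩, fun hc => by linarith [hc.2]⟩
  have hfa : f a = c := hconst a haP
  rcases hcomp with hM | hM <;> rcases hbr with h1 | h1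
  · have := hM (hsubc hm1) (hsubc haIoo) (by linarith)
    have := h1 _ hd1
    linarith
  · have := hM (hsubc haIoo) (hsubc hm2) (by linarith)
    have := h1 _ hd2
    linarith
  · have := hM (hsubc haIoo) (hsubc hm2) (by linarith)
    have := h1 _ hd2
    linarith
  · have := hM (hsubc hm1) (hsubc haIoo) (by linarith)
    have := h1 _ hd1
    linarith

lemma exists_turning_in (hI : I.OrdConnected) (hcont : ContinuousOn f I)
    (hK : Witnesses f I K) {J : Set ℝ}
    (hJc : IsPreconnected J) (hJI : J ⊆ I) (hmono : ¬ MonoOn f J) :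
    ∃ P, IsTurningPlatform f I P ∧ P ⊆ J := by
  have hmono' : ¬ MonotoneOn f J ∧ ¬ AntitoneOn f J := not_or.mp hmono
  obtain ⟨u, hu, v, hv, w, hw, huv, hvw, hd⟩ :=
    (Set.not_monotoneOn_not_antitoneOn_iff_exists_lt_lt).mp hmono'
  obtain ⟨P, hP, hPsub⟩ := dent_turning hI hcont hK (hJI hu) (hJI hw) huv hvw hd
  refine ⟨P, hP, hPsub.trans fun x hx => ?_⟩
  exact hJc.ordConnected.out hu hw ⟨hx.1.le, hx.2.le⟩

lemma witness_remove (hI : I.OrdConnected) (hcont : ContinuousOn f I)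
    (hK : Witnesses f I K) {x : ℝ} (hx : x ∈ K)
    (H : ∀ P, IsTurningPlatform f I P → K ∩ P = {x} → False) :
    Witnesses f I (K \ {x}) := by
  obtain ⟨⟨hKI, hdisc⟩, hmono⟩ := hK
  have hK' : Witnesses f I K := ⟨⟨hKI, hdisc⟩, hmono⟩
  refine ⟨⟨diff_subset.trans hKI, fun z hz => ?_⟩, ?_⟩
  · obtain ⟨ε, hε, hsep⟩ := hdisc z hz
    exact ⟨ε, hε, fun y hy => hsep y hy.1⟩
  · intro z hz
    by_contra hnm
    set J := connectedComponentIn (I \ (K \ {x})) z with hJ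
    have hJI : J ⊆ I := (connectedComponentIn_subset _ _).trans diff_subset
    have hJc : IsPreconnected J := isPreconnected_connectedComponentIn
    have hJK : J ⊆ I \ (K \ {x}) := connectedComponentIn_subset _ _
    have hzJ : z ∈ J := mem_connectedComponentIn hz
    by_cases hxJ : x ∈ J
    · obtain ⟨P, hP, hPJ⟩ := exists_turning_in hI hcont hK' hJc hJI hnm
      have honly : ∀ q ∈ K ∩ P, q = x := by
        rintro q ⟨hqK, hqP⟩
        by_contra hqx
        exact (hJK (hPJ hqP)).2 ⟨hqK, hqx⟩
      obtain ⟨q, hq⟩ := turning_meets hK' hP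
      have hKP : K ∩ P = {x} := by
        apply Subset.antisymm (fun y hy => honly y hy)
        intro y hy
        have hyx : y = x := hy
        rw [hyx, ← honly q hq]
        exact hq
      exact H P hP hKP
    · have hzK : z ∈ I \ K := by
        refine ⟨hz.1, fun hzK => ?_⟩
        have : z = x := by
          by_contra hne
          exact hz.2 ⟨hzK, hne⟩
        rw [this] at hzJ
        exact hxJ hzJ
      have hJ2 : J = connectedComponentIn (I \ K) z := by
        apply Subset.antisymm
        · refine hJc.subset_connectedComponentIn hzJ fun q hq => ⟨hJI hq, fun hqK => ?_⟩
          have : q = x := by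
            by_contra hne
            exact (hJK hq).2 ⟨hqK, hne⟩
          rw [this] at hq
          exact hxJ hq
        · exact isPreconnected_connectedComponentIn.subset_connectedComponentIn
            (mem_connectedComponentIn hzK)
            ((connectedComponentIn_subset _ _).trans
              (diff_subset_diff_right diff_subset))
      rw [hJ2] at hnm
      exact hnm (hmono z hzK)

lemma minimal_of_char (hK : Witnesses f I K)
    (h1 : ∀ x ∈ K, IsTurningPoint f I x)
    (h2 : ∀ P, IsTurningPlatform f I P → ∃! x, x ∈ K ∩ P) :
    MinimalWitness f I K := by
  refine ⟨hK, fun K' hsub hK' => Subset.antisymm hsub fun x hxK => ?_⟩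
  obtain ⟨P, hP, hxP⟩ := h1 x hxK
  obtain ⟨z, hz, huniq⟩ := h2 P hP
  obtain ⟨q, hqK', hqP⟩ := turning_meets hK' hP
  have h3 : q = z := huniq q ⟨hsub hqK', hqP⟩
  have h4 : x = z := huniq x ⟨hxK, hxP⟩
  rw [h4, ← h3]
  exact hqK'

end Aux

/-- (a) A witnessing set `K` is `⊆`-minimal iff all its points are turning
points and it has exactly one point on each turning platform; (b) every
witnessing set contains a `⊆`-minimal one. -/

theorem minimal_witnessing_set
    (I : Set ℝ) (hI : I.OrdConnected) (hnt : I.Nontrivial)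
    (f : ℝ → ℝ) (hcont : ContinuousOn f I) (K : Set ℝ) (hK : Witnesses f I K) :
    (MinimalWitness f I K ↔
      ((∀ x ∈ K, IsTurningPoint f I x) ∧
        ∀ P, IsTurningPlatform f I P → ∃! x, x ∈ K ∩ P)) ∧
    ∃ K' ⊆ K, MinimalWitness f I K' := by
  constructor
  · constructor
    · rintro ⟨hW, hmin⟩
      constructor
      · intro x hxK
        by_contra hnt'
        have H : ∀ P, IsTurningPlatform f I P → K ∩ P = {x} → False := by
          intro P hP hKP
          have hxP : x ∈ K ∩ P := by rw [hKP]; exact mem_singleton x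
          exact hnt' ⟨P, hP, hxP.2⟩
        have heq := hmin (K \ {x}) diff_subset (witness_remove hI hcont hK hxK H)
        have : x ∈ K \ {x} := heq.symm ▸ hxK
        exact this.2 rfl
      · intro P hP
        obtain ⟨q, hq⟩ := turning_meets hK hP
        refine ⟨q, hq, fun y hy => ?_⟩
        by_contra hne
        have H : ∀ P', IsTurningPlatform f I P' → K ∩ P' = {y} → False := by
          intro P' hP' hKP'
          have hyP' : y ∈ P' := (show y ∈ K ∩ P' by rw [hKP']; exact mem_singleton y).2
          have h1 : P' = Platform f I y := platform_eq hP'.1 hyP'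
          have h2 : P = Platform f I y := platform_eq hP.1 hy.2
          have hqP' : q ∈ P' := by rw [h1, ← h2]; exact hq.2
          have : q ∈ ({y} : Set ℝ) := by rw [← hKP']; exact ⟨hq.1, hqP'⟩
          exact hne this.symm
        have heq := hmin (K \ {y}) diff_subset (witness_remove hI hcont hK hy.1 H)
        have : y ∈ K \ {y} := heq.symm ▸ hy.1
        exact this.2 rfl
    · rintro ⟨h1, h2⟩
      exact minimal_of_char hK h1 h2
  · set K₀ := {x | x ∈ K ∧ IsTurningPoint f I x ∧
      ∀ y ∈ K, y ∈ Platform f I x → x ≤ y} with hK₀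
    have hsub : K₀ ⊆ K := fun x hx => hx.1
    have hone : ∀ P, IsTurningPlatform f I P → ∃! x, x ∈ K₀ ∩ P := by
      intro P hP
      obtain ⟨a, b, c, ε, hab, hPab, hc1, hc2, hsubI, hbr⟩ := hP.2
      have hPI : P ⊆ I := by
        obtain ⟨p, hpI, rfl⟩ := hP.1
        exact platform_subset
      have hfin : (K ∩ P).Finite := by
        rw [hPab]
        exact discrete_finite hK.1 (hPab ▸ hPI)
      obtain ⟨m, hm, hmin'⟩ := Set.exists_min_image _ id hfin (turning_meets hK hP)
      have hmP : P = Platform f I m := platform_eq hP.1 hm.2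
      have hmK₀ : m ∈ K₀ := ⟨hm.1, ⟨P, hP, hm.2⟩,
        fun y hyK hyP => hmin' y ⟨hyK, by rw [hmP]; exact hyP⟩⟩
      refine ⟨m, ⟨hmK₀, hm.2⟩, fun z hz => ?_⟩
      have hzP : P = Platform f I z := platform_eq hP.1 hz.2
      exact le_antisymm (hz.1.2.2 m hm.1 (hzP ▸ hm.2)) (hmin' z ⟨hz.1.1, hz.2⟩)
    have hW₀ : Witnesses f I K₀ := by
      refine ⟨⟨hsub.trans hK.1.1, fun z hz => ?_⟩, ?_⟩
      · obtain ⟨ε, hε, hsep⟩ := hK.1.2 z hz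
        exact ⟨ε, hε, fun y hy => hsep y (hsub hy)⟩
      · intro z hz
        by_contra hnm
        obtain ⟨P, hP, hPJ⟩ := exists_turning_in hI hcont hK
          isPreconnected_connectedComponentIn
          ((connectedComponentIn_subset _ _).trans diff_subset) hnm
        obtain ⟨m, hm, _⟩ := hone P hP
        exact ((connectedComponentIn_subset _ _) (hPJ hm.2)).2 hm.1
    exact ⟨K₀, hsub, minimal_of_char hW₀ (fun x hx => hx.2.1) hone⟩
end

section
/- Let I be a nontrivial interval of ℝ and f : I → ℝ continuous and piecewise monotone. Then the collection of turning platforms of f is discrete in I, i.e., every point of I has a neighborhood meeting at most one turning platform. -/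
open Set MeasureTheory

/-- Two platforms sharing a point are equal. -/
lemma platform_eq_of_mem {f : ℝ → ℝ} {I P Q : Set ℝ} {t : ℝ}
    (hP : IsPlatform f I P) (hQ : IsPlatform f I Q) (htP : t ∈ P) (htQ : t ∈ Q) :
    P = Q := by
  obtain ⟨p, hp, rfl⟩ := hP
  obtain ⟨q, hq, rfl⟩ := hQ
  have h1 : f t = f p := (connectedComponentIn_subset _ _ htP).2
  have h2 : f t = f q := (connectedComponentIn_subset _ _ htQ).2
  unfold Platform at *
  rw [connectedComponentIn_eq htP, connectedComponentIn_eq htQ, ← h1, ← h2]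

/-- Every turning platform contains a point of any witnessing set `K`. -/
lemma turning_mem_K {f : ℝ → ℝ} {I K P : Set ℝ}
    (hW : Witnesses f I K) (hP : IsTurningPlatform f I P) :
    ∃ k ∈ K, k ∈ P := by
  by_contra h
  push_neg at h
  obtain ⟨hplat, a, b, c, ε, hab, hPeq, hfc, hε, hsub, hturn⟩ := hP
  have haP : a ∈ P := by rw [hPeq]; exact ⟨le_refl a, hab⟩
  have hbP : b ∈ P := by rw [hPeq]; exact ⟨hab, le_refl b⟩
  have haI : a ∈ I := hsub ⟨by linarith, by linarith⟩
  have hbI : b ∈ I := hsub ⟨by linarith, by linarith⟩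
  obtain ⟨εa, hεa, hKa⟩ := hW.1.2 a haI
  obtain ⟨εb, hεb, hKb⟩ := hW.1.2 b hbI
  set x₁ := a - min εa ε / 2 with hx₁def
  set x₂ := b + min εb ε / 2 with hx₂def
  have hma : 0 < min εa ε := lt_min hεa hε
  have hmb : 0 < min εb ε := lt_min hεb hε
  have hmaε : min εa ε ≤ ε := min_le_right _ _
  have hmbε : min εb ε ≤ ε := min_le_right _ _
  have hmaa : min εa ε ≤ εa := min_le_left _ _
  have hmbb : min εb ε ≤ εb := min_le_left _ _
  have hx₁lt : x₁ < a := by simp only [hx₁def]; linarith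
  have hx₂gt : b < x₂ := by simp only [hx₂def]; linarith
  have hx₁x₂ : x₁ ≤ x₂ := by linarith
  have hIcc : Icc x₁ x₂ ⊆ I \ K := by
    intro y hy
    obtain ⟨hy1, hy2⟩ := hy
    have hyI : y ∈ Ioo (a - ε) (b + ε) := by
      constructor
      · simp only [hx₁def] at hy1; linarith
      · simp only [hx₂def] at hy2; linarith
    refine ⟨hsub hyI, fun hyK => ?_⟩
    by_cases hya : y < a
    · have : y = a := hKa y hyK (by
        rw [abs_lt]; constructor
        · simp only [hx₁def] at hy1; linarith
        · linarith)
      exact absurd this (ne_of_lt hya)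
    · by_cases hyb : b < y
      · have : y = b := hKb y hyK (by
          rw [abs_lt]; constructor
          · linarith
          · simp only [hx₂def] at hy2; linarith)
        exact absurd this (ne_of_gt hyb)
      · exact h y hyK (by rw [hPeq]; exact ⟨le_of_not_gt hya, le_of_not_gt hyb⟩)
  have hx₁mem : x₁ ∈ Icc x₁ x₂ := ⟨le_refl _, hx₁x₂⟩
  have hx₂mem : x₂ ∈ Icc x₁ x₂ := ⟨hx₁x₂, le_refl _⟩
  have hx₁IK : x₁ ∈ I \ K := hIcc hx₁mem
  have hsubC : Icc x₁ x₂ ⊆ connectedComponentIn (I \ K) x₁ :=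
    isPreconnected_Icc.subset_connectedComponentIn hx₁mem hIcc
  have haC := hsubC (⟨le_of_lt hx₁lt, by linarith⟩ : a ∈ Icc x₁ x₂)
  have hbC := hsubC (⟨by linarith, le_of_lt hx₂gt⟩ : b ∈ Icc x₁ x₂)
  have hx₁C := hsubC hx₁mem
  have hx₂C := hsubC hx₂mem
  have hfa : f a = c := hfc a haP
  have hfb : f b = c := hfc b hbP
  have hx₁nP : x₁ ∉ P := by rw [hPeq]; exact fun hm => absurd hm.1 (not_le.mpr hx₁lt)
  have hx₂nP : x₂ ∉ P := by rw [hPeq]; exact fun hm => absurd hm.2 (not_le.mpr hx₂gt)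
  have hx₁d : x₁ ∈ Ioo (a - ε) (b + ε) \ P :=
    ⟨⟨by simp only [hx₁def]; linarith, by linarith⟩, hx₁nP⟩
  have hx₂d : x₂ ∈ Ioo (a - ε) (b + ε) \ P :=
    ⟨⟨by linarith, by simp only [hx₂def]; linarith⟩, hx₂nP⟩
  rcases hW.2 x₁ hx₁IK with hm | hm
  · rcases hturn with ht | ht
    · have h1 := ht x₁ hx₁d
      have h2 := hm hx₁C haC (le_of_lt hx₁lt)
      linarith
    · have h1 := ht x₂ hx₂d
      have h2 := hm hbC hx₂C (le_of_lt hx₂gt)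
      linarith
  · rcases hturn with ht | ht
    · have h1 := ht x₂ hx₂d
      have h2 := hm hbC hx₂C (le_of_lt hx₂gt)
      linarith
    · have h1 := ht x₁ hx₁d
      have h2 := hm hx₁C haC (le_of_lt hx₁lt)
      linarith

/-- The collection of turning platforms of a continuous piecewise monotone
function is discrete in `I`: every point of `I` has a neighborhood meeting at
most one turning platform. -/
theorem turningPlatforms_discrete
    (I : Set ℝ) (hI : I.OrdConnected) (hnt : I.Nontrivial)
    (f : ℝ → ℝ) (hcont : ContinuousOn f I) (hpm : PiecewiseMonotoneOn f I) :
    ∀ x ∈ I, ∃ ε > 0, ∀ P Q, IsTurningPlatform f I P → IsTurningPlatform f I Q →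
      (P ∩ Ioo (x - ε) (x + ε)).Nonempty → (Q ∩ Ioo (x - ε) (x + ε)).Nonempty →
      P = Q := by
  intro x hx
  obtain ⟨K, hK⟩ := hpm
  obtain ⟨δ, hδ, hKdisc⟩ := hK.1.2 x hx
  -- any turning platform strictly left of x meeting (x-δ, x) contains x - δ
  have hleftmem : ∀ P, IsTurningPlatform f I P → P ⊆ Iio x →
      (P ∩ Ioo (x - δ) x).Nonempty → x - δ ∈ P := by
    intro P hP hPlt ⟨p, hpP, hpI⟩
    obtain ⟨k, hkK, hkP⟩ := turning_mem_K hK hP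
    have hkx : k < x := hPlt hkP
    have hkle : k ≤ x - δ := by
      by_contra hc
      push_neg at hc
      have : k = x := hKdisc k hkK (by rw [abs_lt]; constructor <;> linarith)
      linarith
    obtain ⟨_, a, b, c, ε, hab, hPeq, _⟩ := hP
    rw [hPeq] at hkP hpP ⊢
    exact ⟨le_trans hkP.1 hkle, le_trans (le_of_lt hpI.1) hpP.2⟩
  have hrightmem : ∀ P, IsTurningPlatform f I P → P ⊆ Ioi x →
      (P ∩ Ioo x (x + δ)).Nonempty → x + δ ∈ P := by
    intro P hP hPgt ⟨p, hpP, hpI⟩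
    obtain ⟨k, hkK, hkP⟩ := turning_mem_K hK hP
    have hkx : x < k := hPgt hkP
    have hkle : x + δ ≤ k := by
      by_contra hc
      push_neg at hc
      have : k = x := hKdisc k hkK (by rw [abs_lt]; constructor <;> linarith)
      linarith
    obtain ⟨_, a, b, c, ε, hab, hPeq, _⟩ := hP
    rw [hPeq] at hkP hpP ⊢
    exact ⟨le_trans hpP.1 (le_of_lt hpI.2), le_trans hkle hkP.2⟩
  -- a small radius avoiding all left platforms
  have hL : ∃ εL > 0, εL ≤ δ ∧ ∀ P, IsTurningPlatform f I P → P ⊆ Iio x →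
      (P ∩ Ioo (x - εL) (x + εL)).Nonempty → False := by
    by_cases h : ∃ P, IsTurningPlatform f I P ∧ P ⊆ Iio x ∧ (P ∩ Ioo (x - δ) x).Nonempty
    · obtain ⟨P₀, hP₀, hP₀lt, hP₀ne⟩ := h
      obtain ⟨_, a, b, c, ε₀, hab, hPeq, _⟩ := hP₀
      have hbx : b < x := hP₀lt (by rw [hPeq]; exact ⟨hab, le_refl b⟩)
      refine ⟨min δ (x - b), lt_min hδ (by linarith), min_le_left _ _, ?_⟩
      rintro P hP hPlt ⟨p, hpP, hpb⟩
      have hpx : p < x := hPlt hpP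
      have hple : x - δ < p :=
        lt_of_le_of_lt (by simp [min_le_left]; linarith [min_le_left δ (x - b)]) hpb.1
      have heq : P = P₀ := by
        have h1 := hleftmem P hP hPlt ⟨p, hpP, hple, hpx⟩
        have h2 := hleftmem P₀ ⟨‹IsPlatform f I P₀›, a, b, c, ε₀, hab, hPeq, ‹_›⟩ hP₀lt hP₀ne
        exact platform_eq_of_mem hP.1 ‹IsPlatform f I P₀› h1 h2
      rw [heq, hPeq] at hpP
      have : p ≤ b := hpP.2
      have : x - min δ (x - b) < p := hpb.1
      have : min δ (x - b) ≤ x - b := min_le_right _ _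
      linarith
    · push_neg at h
      refine ⟨δ, hδ, le_refl δ, ?_⟩
      rintro P hP hPlt ⟨p, hpP, hpb⟩
      exact absurd (h P hP hPlt) (Set.Nonempty.ne_empty ⟨p, hpP, hpb.1, hPlt hpP⟩)
  have hR : ∃ εR > 0, εR ≤ δ ∧ ∀ P, IsTurningPlatform f I P → P ⊆ Ioi x →
      (P ∩ Ioo (x - εR) (x + εR)).Nonempty → False := by
    by_cases h : ∃ P, IsTurningPlatform f I P ∧ P ⊆ Ioi x ∧ (P ∩ Ioo x (x + δ)).Nonempty
    · obtain ⟨P₀, hP₀, hP₀gt, hP₀ne⟩ := h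
      obtain ⟨_, a, b, c, ε₀, hab, hPeq, _⟩ := hP₀
      have hax : x < a := hP₀gt (by rw [hPeq]; exact ⟨le_refl a, hab⟩)
      refine ⟨min δ (a - x), lt_min hδ (by linarith), min_le_left _ _, ?_⟩
      rintro P hP hPgt ⟨p, hpP, hpb⟩
      have hpx : x < p := hPgt hpP
      have hple : p < x + δ :=
        lt_of_lt_of_le hpb.2 (by linarith [min_le_left δ (a - x)])
      have heq : P = P₀ := by
        have h1 := hrightmem P hP hPgt ⟨p, hpP, hpx, hple⟩
        have h2 := hrightmem P₀ ⟨‹IsPlatform f I P₀›, a, b, c, ε₀, hab, hPeq, ‹_›⟩ hP₀gt hP₀ne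
        exact platform_eq_of_mem hP.1 ‹IsPlatform f I P₀› h1 h2
      rw [heq, hPeq] at hpP
      have : a ≤ p := hpP.1
      have : p < x + min δ (a - x) := hpb.2
      have : min δ (a - x) ≤ a - x := min_le_right _ _
      linarith
    · push_neg at h
      refine ⟨δ, hδ, le_refl δ, ?_⟩
      rintro P hP hPgt ⟨p, hpP, hpb⟩
      exact absurd (h P hP hPgt) (Set.Nonempty.ne_empty ⟨p, hpP, hPgt hpP, hpb.2⟩)
  obtain ⟨εL, hεL, hεLδ, hLprop⟩ := hL
  obtain ⟨εR, hεR, hεRδ, hRprop⟩ := hR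
  refine ⟨min εL εR, lt_min hεL hεR, ?_⟩
  have hxmem : ∀ R, IsTurningPlatform f I R →
      (R ∩ Ioo (x - min εL εR) (x + min εL εR)).Nonempty → x ∈ R := by
    rintro R hR ⟨r, hrR, hrb⟩
    obtain ⟨_, a, b, c, ε₀, hab, hReq, _⟩ := hR
    by_contra hxR
    rw [hReq, Set.mem_Icc] at hxR
    push_neg at hxR
    rcases lt_or_ge x a with hc | hc
    · -- x < a : R strictly right of x
      have hRgt : R ⊆ Ioi x := by
        rw [hReq]; intro y hy; exact lt_of_lt_of_le hc hy.1
      exact hRprop R ⟨‹IsPlatform f I R›, a, b, c, ε₀, hab, hReq, ‹_›⟩ hRgt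
        ⟨r, hrR, ⟨by linarith [min_le_right εL εR, hrb.1],
          by linarith [min_le_right εL εR, hrb.2]⟩⟩
    · -- b < x : R strictly left of x
      have hc : b < x := hxR hc
      have hRlt : R ⊆ Iio x := by
        rw [hReq]; intro y hy; exact lt_of_le_of_lt hy.2 hc
      exact hLprop R ⟨‹IsPlatform f I R›, a, b, c, ε₀, hab, hReq, ‹_›⟩ hRlt
        ⟨r, hrR, ⟨by linarith [min_le_left εL εR, hrb.1],
          by linarith [min_le_left εL εR, hrb.2]⟩⟩
  intro P Q hP hQ hPne hQne
  exact platform_eq_of_mem hP.1 hQ.1 (hxmem P hP hPne) (hxmem Q hQ hQne)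
end

section
/- Let I be a nontrivial interval of ℝ and f : I → ℝ continuous and piecewise monotone. Then the collection of platforms of points in the zero set of f is discrete in I (every point of I has a neighborhood meeting at most one such platform). -/
open Set MeasureTheory

/-- The collection of platforms of points in the zero set of a continuous
piecewise monotone function is discrete in `I`: every point of `I` has a
neighborhood meeting at most one such platform. -/
theorem zero_platforms_discrete
    (I : Set ℝ) (hI : I.OrdConnected) (hnt : I.Nontrivial)
    (f : ℝ → ℝ) (hcont : ContinuousOn f I) (hpm : PiecewiseMonotoneOn f I) :
    ∀ x ∈ I, ∃ ε > 0, ∀ P Q,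
      (∃ p ∈ I, f p = 0 ∧ P = Platform f I p) →
      (∃ q ∈ I, f q = 0 ∧ Q = Platform f I q) →
      (P ∩ Ioo (x - ε) (x + ε)).Nonempty → (Q ∩ Ioo (x - ε) (x + ε)).Nonempty →
      P = Q := by
  obtain ⟨K, ⟨⟨hKI, hKdisc⟩, hmono⟩⟩ := hpm
  intro x hx
  by_cases hfx : f x = 0
  case neg =>
    -- f x ≠ 0 : no zeros nearby
    obtain ⟨δ, hδ, hδ'⟩ := Metric.continuousWithinAt_iff.mp (hcont x hx) |f x| (abs_pos.mpr hfx)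
    refine ⟨δ, hδ, ?_⟩
    rintro P Q ⟨p, hpI, hfp, hP⟩ _ ⟨w, hwP, hwIoo⟩ _
    exfalso
    have hwF : w ∈ {y ∈ I | f y = f p} := by
      rw [hP] at hwP; exact connectedComponentIn_subset _ _ hwP
    have hfw : f w = 0 := hwF.2.trans hfp
    have hdist : dist w x < δ := by
      rw [Real.dist_eq]
      rcases hwIoo with ⟨h1, h2⟩
      rw [abs_lt]; constructor <;> linarith
    have := hδ' hwF.1 hdist
    rw [Real.dist_eq, hfw, zero_sub, abs_neg] at this
    exact lt_irrefl _ this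
  case pos =>
    obtain ⟨ε, hε, hK⟩ := hKdisc x hx
    refine ⟨ε, hε, ?_⟩
    set Z : Set ℝ := {y ∈ I ∩ Ioo (x - ε) (x + ε) | f y = 0} with hZdef
    -- Z is order-connected
    have hZord : Z.OrdConnected := by
      constructor
      rintro y ⟨⟨hyI, hyIoo⟩, hfy⟩ z ⟨⟨hzI, hzIoo⟩, hfz⟩ t ⟨hyt, htz⟩
      have htI : t ∈ I := hI.out hyI hzI ⟨hyt, htz⟩
      have htIoo : t ∈ Ioo (x - ε) (x + ε) := ⟨lt_of_lt_of_le hyIoo.1 hyt, lt_of_le_of_lt htz hzIoo.2⟩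
      refine ⟨⟨htI, htIoo⟩, ?_⟩
      rcases lt_trichotomy t x with htx | htx | htx
      · -- t < x : use monotone on [y, x)
        have hyx : y < x := lt_of_le_of_lt hyt htx
        have hsub : Ico y x ⊆ I \ K := by
          rintro s ⟨hys, hsx⟩
          refine ⟨hI.out hyI hx ⟨hys, hsx.le⟩, fun hsK => ?_⟩
          have : s = x := hK s hsK (by rw [abs_lt]; constructor <;>
            [linarith [hyIoo.1]; linarith])
          exact absurd this hsx.ne
        have hyIK : y ∈ I \ K := hsub ⟨le_refl y, hyx⟩
        have hS : Ico y x ⊆ connectedComponentIn (I \ K) y :=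
          isPreconnected_Ico.subset_connectedComponentIn ⟨le_refl y, hyx⟩ hsub
        have hIooI : Ioo t x ⊆ I := fun s hs => hI.out htI hx ⟨hs.1.le, hs.2.le⟩
        have hlim : Filter.Tendsto f (nhdsWithin x (Ioo t x)) (nhds (f x)) :=
          (hcont x hx).mono hIooI
        have hnb : (nhdsWithin x (Ioo t x)).NeBot := by
          rw [← mem_closure_iff_nhdsWithin_neBot, closure_Ioo htx.ne]
          exact ⟨htx.le, le_refl x⟩
        have hIooS : Ioo t x ⊆ connectedComponentIn (I \ K) y := fun s hs =>
          hS ⟨hyt.trans hs.1.le, hs.2⟩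
        have htS : t ∈ connectedComponentIn (I \ K) y := hS ⟨hyt, htx⟩
        have hyS : y ∈ connectedComponentIn (I \ K) y := hS ⟨le_refl y, hyx⟩
        rcases hmono y hyIK with hm | hm
        · have h1 : (0:ℝ) ≤ f t := by
            have := hm hyS htS hyt; rw [hfy] at this; exact this
          have h2 : f t ≤ f x := ge_of_tendsto hlim (by
            filter_upwards [self_mem_nhdsWithin] with s hs
            exact hm htS (hIooS hs) hs.1.le)
          rw [hfx] at h2; linarith
        · have h1 : f t ≤ 0 := by
            have := hm hyS htS hyt; rw [hfy] at this; exact this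
          have h2 : f x ≤ f t := le_of_tendsto hlim (by
            filter_upwards [self_mem_nhdsWithin] with s hs
            exact hm htS (hIooS hs) hs.1.le)
          rw [hfx] at h2; linarith
      · rw [htx]; exact hfx
      · -- x < t : use monotone on (x, z]
        have hxz : x < z := lt_of_lt_of_le htx htz
        have hsub : Ioc x z ⊆ I \ K := by
          rintro s ⟨hxs, hsz⟩
          refine ⟨hI.out hx hzI ⟨hxs.le, hsz⟩, fun hsK => ?_⟩
          have : s = x := hK s hsK (by rw [abs_lt]; constructor <;>
            [linarith; linarith [hzIoo.2]])
          exact absurd this hxs.ne'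
        have hzIK : z ∈ I \ K := hsub ⟨hxz, le_refl z⟩
        have hS : Ioc x z ⊆ connectedComponentIn (I \ K) z :=
          isPreconnected_Ioc.subset_connectedComponentIn ⟨hxz, le_refl z⟩ hsub
        have hIooI : Ioo x t ⊆ I := fun s hs => hI.out hx htI ⟨hs.1.le, hs.2.le⟩
        have hlim : Filter.Tendsto f (nhdsWithin x (Ioo x t)) (nhds (f x)) :=
          (hcont x hx).mono hIooI
        have hnb : (nhdsWithin x (Ioo x t)).NeBot := by
          rw [← mem_closure_iff_nhdsWithin_neBot, closure_Ioo htx.ne]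
          exact ⟨le_refl x, htx.le⟩
        have hIooS : Ioo x t ⊆ connectedComponentIn (I \ K) z := fun s hs =>
          hS ⟨hs.1, hs.2.le.trans htz⟩
        have htS : t ∈ connectedComponentIn (I \ K) z := hS ⟨htx, htz⟩
        have hzS : z ∈ connectedComponentIn (I \ K) z := hS ⟨hxz, le_refl z⟩
        rcases hmono z hzIK with hm | hm
        · have h1 : f t ≤ 0 := by
            have := hm htS hzS htz; rw [hfz] at this; exact this
          have h2 : f x ≤ f t := le_of_tendsto hlim (by
            filter_upwards [self_mem_nhdsWithin] with s hs
            exact hm (hIooS hs) htS hs.2.le)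
          rw [hfx] at h2; linarith
        · have h1 : (0:ℝ) ≤ f t := by
            have := hm htS hzS htz; rw [hfz] at this; exact this
          have h2 : f t ≤ f x := ge_of_tendsto hlim (by
            filter_upwards [self_mem_nhdsWithin] with s hs
            exact hm (hIooS hs) htS hs.2.le)
          rw [hfx] at h2; linarith
    have hZpre : IsPreconnected Z := isPreconnected_iff_ordConnected.mpr hZord
    -- main argument
    rintro P Q ⟨p, hpI, hfp, hP⟩ ⟨q, hqI, hfq, hQ⟩ ⟨w, hwP, hwIoo⟩ ⟨v, hvQ, hvIoo⟩
    set F : Set ℝ := {y ∈ I | f y = 0} with hF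
    have hPF : P = connectedComponentIn F p := by rw [hP, Platform, hfp]
    have hQF : Q = connectedComponentIn F q := by rw [hQ, Platform, hfq]
    have hwF : w ∈ F := connectedComponentIn_subset F p (hPF ▸ hwP)
    have hvF : v ∈ F := connectedComponentIn_subset F q (hQF ▸ hvQ)
    have hwZ : w ∈ Z := ⟨⟨hwF.1, hwIoo⟩, hwF.2⟩
    have hvZ : v ∈ Z := ⟨⟨hvF.1, hvIoo⟩, hvF.2⟩
    have hZF : Z ⊆ F := fun s hs => ⟨hs.1.1, hs.2⟩
    have hZw : Z ⊆ connectedComponentIn F w :=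
      hZpre.subset_connectedComponentIn hwZ hZF
    have hPw : P = connectedComponentIn F w := by
      rw [hPF]; exact connectedComponentIn_eq (hPF ▸ hwP)
    have hvP : v ∈ P := hPw ▸ hZw hvZ
    have hQv : Q = connectedComponentIn F v := by
      rw [hQF]; exact connectedComponentIn_eq (hQF ▸ hvQ)
    rw [hPw, hQv, connectedComponentIn_eq (hPw ▸ hvP)]
end

section
/- Let I be a nontrivial interval of ℝ, n a nonnegative integer, and f : I → ℝ a C^n function. If p ∈ I satisfies D^n f(p) ≠ 0, then for every ε > 0 there exists q ∈ I with |q − p| < ε and D^j f(q) ≠ 0 for all j = 0,…,n. -/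
open Set MeasureTheory

/-!
If `D^k f` vanished identically near a point of `I`, so would `D^(k+1) f`. Hence every point
where `D^(k+1) f, …, D^n f` are nonzero is a limit of points where `D^k f, …, D^n f` are nonzero,
the latter set being relatively open in `I` by continuity of the derivatives of order `≤ n`.
Descending from `k = n` to `k = 0`, `p` lies in the closure of the set where all of
`f, D f, …, D^n f` are nonzero.
-/

open Filter Topology

section derivWithin

variable {𝕜 F : Type*} [NontriviallyNormedField 𝕜] [NormedAddCommGroup F] [NormedSpace 𝕜 F]
  {g : 𝕜 → F} {s : Set 𝕜}

theorem frequently_ne_zero_of_derivWithin_ne_zero {x : 𝕜} (hx : x ∈ s)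
    (hg : derivWithin g s x ≠ 0) : ∃ᶠ y in 𝓝[s] x, g y ≠ 0 := by
  intro hzero
  simp only [not_not] at hzero
  refine hg ?_
  rw [EventuallyEq.derivWithin_eq (f := fun _ ↦ (0 : F)) hzero (hzero.self_of_nhdsWithin hx)]
  exact congrFun (derivWithin_const s (0 : F)) x

theorem subset_closure_setOf_ne_zero_of_derivWithin_ne_zero {U : Set 𝕜}
    (hUs : U ⊆ s) (hU : ∀ x ∈ U, U ∈ 𝓝[s] x) (hg : ∀ x ∈ U, derivWithin g s x ≠ 0) :
    U ⊆ closure {x ∈ U | g x ≠ 0} := fun x hx ↦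
  mem_closure_iff_frequently.2 <|
    (((frequently_ne_zero_of_derivWithin_ne_zero (hUs hx) (hg x hx)).and_eventually (hU x hx)).mono
      fun _ h ↦ ⟨h.2, h.1⟩).filter_mono nhdsWithin_le_nhds

end derivWithin

theorem subset_closure_of_forall_lt_subset_closure {X : Type*} [TopologicalSpace X]
    (A : ℕ → Set X) (n : ℕ) (h : ∀ k < n, A (k + 1) ⊆ closure (A k)) : A n ⊆ closure (A 0) := by
  induction n with
  | zero => exact subset_closure
  | succ n ih =>
    exact (h n n.lt_succ_self).trans <|
      closure_minimal (ih fun k hk ↦ h k (hk.trans n.lt_succ_self)) isClosed_closure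

def derivsNeZeroSet (f : ℝ → ℝ) (s : Set ℝ) (k n : ℕ) : Set ℝ :=
  {x ∈ s | ∀ j ∈ Finset.Icc k n, iteratedDerivWithin j f s x ≠ 0}

section derivsNeZeroSet

variable {f : ℝ → ℝ} {s : Set ℝ} {n : ℕ}

theorem derivsNeZeroSet_mem_nhdsWithin (hf : ContDiffOn ℝ n f s) (hs : UniqueDiffOn ℝ s) {k : ℕ}
    {x : ℝ} (hx : x ∈ derivsNeZeroSet f s k n) : derivsNeZeroSet f s k n ∈ 𝓝[s] x := by
  have hderivs : ∀ᶠ y in 𝓝[s] x, ∀ j ∈ Finset.Icc k n, iteratedDerivWithin j f s y ≠ 0 := by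
    refine (eventually_all_finset _).2 fun j hj ↦ ?_
    have hcont := hf.continuousOn_iteratedDerivWithin (by exact_mod_cast (Finset.mem_Icc.1 hj).2) hs
    exact (hcont x hx.1).eventually (eventually_ne_nhds (hx.2 j hj))
  exact Eventually.and self_mem_nhdsWithin hderivs

theorem derivsNeZeroSet_succ_subset_closure (hf : ContDiffOn ℝ n f s) (hs : UniqueDiffOn ℝ s)
    {k : ℕ} (hk : k < n) : derivsNeZeroSet f s (k + 1) n ⊆ closure (derivsNeZeroSet f s k n) := by
  have hsplit : {x ∈ derivsNeZeroSet f s (k + 1) n | iteratedDerivWithin k f s x ≠ 0} =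
      derivsNeZeroSet f s k n := by
    ext x
    simp only [derivsNeZeroSet, mem_ofPred_eq, ← Finset.insert_Icc_add_one_left_eq_Icc hk.le,
      Finset.forall_mem_insert]
    tauto
  rw [← hsplit]
  refine subset_closure_setOf_ne_zero_of_derivWithin_ne_zero (fun _ hx ↦ hx.1)
    (fun _ hx ↦ derivsNeZeroSet_mem_nhdsWithin hf hs hx) fun x hx ↦ ?_
  rw [← iteratedDerivWithin_succ]
  exact hx.2 (k + 1) (Finset.mem_Icc.2 ⟨le_rfl, hk⟩)

end derivsNeZeroSet

/-- If `D^n f(p) ≠ 0` then arbitrarily close to `p` there are points where all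
derivatives of `f` of order `≤ n` are nonzero. -/
theorem exists_near_point_all_derivs_ne_zero
    (n : ℕ) (I : Set ℝ) (hI : I.OrdConnected) (hnt : I.Nontrivial)
    (f : ℝ → ℝ) (hf : ContDiffOn ℝ n f I)
    (p : ℝ) (hp : p ∈ I) (hpn : iteratedDerivWithin n f I p ≠ 0) :
    ∀ ε > 0, ∃ q ∈ I, |q - p| < ε ∧
      ∀ j ≤ n, iteratedDerivWithin j f I q ≠ 0 := by
  have hs := hI.uniqueDiffOn hnt
  have hpn' : p ∈ derivsNeZeroSet f I n n := ⟨hp, by simpa using hpn⟩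
  have hp_closure : p ∈ closure (derivsNeZeroSet f I 0 n) :=
    subset_closure_of_forall_lt_subset_closure (derivsNeZeroSet f I · n) n
      (fun _ hk ↦ derivsNeZeroSet_succ_subset_closure hf hs hk) hpn'
  intro ε hε
  obtain ⟨q, ⟨hqI, hq⟩, hpq⟩ := Metric.mem_closure_iff.1 hp_closure ε hε
  exact ⟨q, hqI, by rwa [dist_comm, Real.dist_eq] at hpq,
    fun j hj ↦ hq j (Finset.mem_Icc.2 ⟨j.zero_le, hj⟩)⟩
end

section
/- Let I be a nontrivial interval of ℝ and f : I → ℝ a C^1 function. If Df is piecewise monotone on I, then so is f. -/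
open Set MeasureTheory

/-!
On each component `C` of `I \ K` the derivative `f'` is monotone, so it changes sign at most once:
some `t ∈ C` has `f'` of constant sign on either side of it in `C`. Adding one such point per
component keeps the exceptional set closed and discrete, since on each side of a point of `I` a
`K`-free one-sided neighbourhood lies in a single component and so contains at most one added point.
On the components of the complement of the enlarged set `f'` has constant sign, so `f` is monotone.
-/

open Topology

def HasConstSignOn (F : ℝ → ℝ) (A : Set ℝ) : Prop :=
  (∀ y ∈ A, 0 ≤ F y) ∨ ∀ y ∈ A, F y ≤ 0

def IsSignCut (F : ℝ → ℝ) (S : Set ℝ) (t : ℝ) : Prop :=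
  t ∈ S ∧ HasConstSignOn F (S ∩ Iio t) ∧ HasConstSignOn F (S ∩ Ioi t)

section SignCut

variable {F : ℝ → ℝ} {S A B : Set ℝ} {t : ℝ}

theorem HasConstSignOn.mono (h : HasConstSignOn F B) (hAB : A ⊆ B) : HasConstSignOn F A :=
  h.imp (fun h y hy => h y (hAB hy)) fun h y hy => h y (hAB hy)

theorem hasConstSignOn_neg_iff : HasConstSignOn (-F) A ↔ HasConstSignOn F A := by
  simp only [HasConstSignOn, Pi.neg_apply, neg_nonneg, neg_nonpos]
  exact or_comm

theorem isSignCut_neg_iff : IsSignCut (-F) S t ↔ IsSignCut F S t := by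
  simp only [IsSignCut, hasConstSignOn_neg_iff]

theorem MonotoneOn.exists_isSignCut (hF : MonotoneOn F S) (hS : S.OrdConnected)
    (hne : S.Nonempty) : ∃ t, IsSignCut F S t := by
  by_cases hconst : HasConstSignOn F S
  · obtain ⟨t, ht⟩ := hne
    exact ⟨t, ht, hconst.mono inter_subset_left, hconst.mono inter_subset_left⟩
  simp only [HasConstSignOn, not_or, not_forall, not_le, exists_prop] at hconst
  obtain ⟨⟨a, ha, hFa⟩, b, hb, hFb⟩ := hconst
  set N := {y ∈ S | F y < 0}
  have hNb : ∀ y ∈ N, y ≤ b := fun y hy =>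
    le_of_not_gt fun hby => (hF hb hy.1 hby.le).not_gt (hy.2.trans hFb)
  have hN : N.Nonempty := ⟨a, ha, hFa⟩
  have hbdd : BddAbove N := ⟨b, hNb⟩
  refine ⟨sSup N, hS.out ha hb ⟨le_csSup hbdd ⟨ha, hFa⟩, csSup_le hN hNb⟩,
    Or.inr fun y hy => ?_, Or.inl fun y hy => ?_⟩
  · obtain ⟨z, hzN, hyz⟩ := exists_lt_of_lt_csSup hN hy.2
    exact (hF hy.1 hzN.1 hyz.le).trans hzN.2.le
  · exact not_lt.1 fun hneg => (le_csSup hbdd ⟨hy.1, hneg⟩).not_gt hy.2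

theorem MonoOn.exists_isSignCut (hF : MonoOn F S) (hS : S.OrdConnected) (hne : S.Nonempty) :
    ∃ t, IsSignCut F S t := by
  rcases hF with hF | hF
  · exact hF.exists_isSignCut hS hne
  · have hF' : MonotoneOn (-F) S := hF.neg
    obtain ⟨t, ht⟩ := hF'.exists_isSignCut hS hne
    exact ⟨t, isSignCut_neg_iff.1 ht⟩

theorem Set.OrdConnected.subset_Iio_or_subset_Ioi (hA : A.OrdConnected) (ht : t ∉ A) :
    A ⊆ Iio t ∨ A ⊆ Ioi t := by
  by_contra! h
  simp only [not_subset, mem_Iio, mem_Ioi] at h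
  obtain ⟨⟨a, ha, hat⟩, b, hb, hbt⟩ := h
  exact ht (hA.out hb ha ⟨not_lt.1 hbt, not_lt.1 hat⟩)

theorem IsSignCut.hasConstSignOn (h : IsSignCut F S t) (hA : A.OrdConnected) (hAS : A ⊆ S)
    (ht : t ∉ A) : HasConstSignOn F A := by
  rcases hA.subset_Iio_or_subset_Ioi ht with hlt | hgt
  · exact h.2.1.mono (subset_inter hAS hlt)
  · exact h.2.2.mono (subset_inter hAS hgt)

end SignCut

theorem monoOn_of_hasConstSignOn_derivWithin {f : ℝ → ℝ} {I D : Set ℝ}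
    (hf : DifferentiableOn ℝ f I) (hD : D.OrdConnected) (hDI : D ⊆ I)
    (h : HasConstSignOn (derivWithin f I) D) : MonoOn f D := by
  have hderiv : ∀ x ∈ interior D, HasDerivWithinAt f (derivWithin f I x) (interior D) x :=
    fun x hx => (hf x (hDI (interior_subset hx))).hasDerivWithinAt.mono
      (interior_subset.trans hDI)
  have hcont : ContinuousOn f D := hf.continuousOn.mono hDI
  rcases h with h | h
  · exact Or.inl <| monotoneOn_of_hasDerivWithinAt_nonneg hD.convex hcont hderiv
      fun x hx => h x (interior_subset hx)
  · exact Or.inr <| antitoneOn_of_hasDerivWithinAt_nonpos hD.convex hcont hderiv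
      fun x hx => h x (interior_subset hx)

theorem closedDiscreteIn_iff_eventually {K I : Set ℝ} :
    ClosedDiscreteIn K I ↔ K ⊆ I ∧ ∀ x ∈ I, ∀ᶠ y in 𝓝[≠] x, y ∉ K := by
  refine and_congr_right fun _ => forall₂_congr fun x _ => ?_
  rw [eventually_nhdsWithin_iff, Metric.eventually_nhds_iff]
  simp only [Real.dist_eq, mem_compl_singleton_iff]
  exact exists_congr fun ε => and_congr_right fun _ =>
    ⟨fun h y hy hne hK => hne (h y hK hy), fun h y hK hy => by_contra fun hne => h hy hne hK⟩

theorem ClosedDiscreteIn.union_of_subsingleton {K T I : Set ℝ} (hK : ClosedDiscreteIn K I)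
    (hI : I.OrdConnected) (hTI : T ⊆ I)
    (hT : ∀ x ∈ I \ K, (T ∩ connectedComponentIn (I \ K) x).Subsingleton) :
    ClosedDiscreteIn (K ∪ T) I := by
  obtain ⟨hKI, hKx⟩ := hK
  have hgap : ∀ a b, Ioo a b ∩ I ⊆ I \ K → (T ∩ Ioo a b).Subsingleton := by
    rintro a b hab t ⟨htT, htab⟩ s ⟨hsT, hsab⟩
    have hC : Ioo a b ∩ I ⊆ connectedComponentIn (I \ K) t :=
      (ordConnected_Ioo.inter hI).isPreconnected.subset_connectedComponentIn
        ⟨htab, hTI htT⟩ hab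
    exact hT t (hab ⟨htab, hTI htT⟩) ⟨htT, hC ⟨htab, hTI htT⟩⟩ ⟨hsT, hC ⟨hsab, hTI hsT⟩⟩
  refine closedDiscreteIn_iff_eventually.2 ⟨union_subset hKI hTI, fun x hx => ?_⟩
  obtain ⟨ε, hε, hKε⟩ := hKx x hx
  have hfree : ∀ z ∈ K, z ∈ Ioo (x - ε) (x + ε) → z = x := fun z hz hzε =>
    hKε z hz (abs_sub_lt_iff.2 ⟨by linarith [hzε.2], by linarith [hzε.1]⟩)
  have hleft : (T ∩ Ioo (x - ε) x).Subsingleton := hgap _ _ fun z hz =>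
    ⟨hz.2, fun hzK => hz.1.2.ne (hfree z hzK ⟨hz.1.1, by linarith [hz.1.2]⟩)⟩
  have hright : (T ∩ Ioo x (x + ε)).Subsingleton := hgap _ _ fun z hz =>
    ⟨hz.2, fun hzK => hz.1.1.ne' (hfree z hzK ⟨by linarith [hz.1.1], hz.1.2⟩)⟩
  have hxS : x ∉ T ∩ Ioo (x - ε) x ∪ T ∩ Ioo x (x + ε) := by
    rintro (⟨-, hx'⟩ | ⟨-, hx'⟩)
    exacts [lt_irrefl x hx'.2, lt_irrefl x hx'.1]
  filter_upwards [nhdsWithin_le_nhds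
      ((hleft.finite.union hright.finite).isClosed.isOpen_compl.mem_nhds hxS),
    nhdsWithin_le_nhds (Ioo_mem_nhds (sub_lt_self x hε) (lt_add_of_pos_right x hε)),
    self_mem_nhdsWithin] with y hyS hyε hyx
  rintro (hyK | hyT)
  · exact hyx (hfree y hyK hyε)
  · rcases lt_or_gt_of_ne hyx with hlt | hgt
    exacts [hyS (Or.inl ⟨hyT, hyε.1, hlt⟩), hyS (Or.inr ⟨hyT, hgt, hyε.2⟩)]

theorem piecewiseMonotone_of_deriv_piecewiseMonotone_general
    (I : Set ℝ) (hI : I.OrdConnected)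
    (f : ℝ → ℝ) (hf : ContDiffOn ℝ 1 f I)
    (hDf : PiecewiseMonotoneOn (derivWithin f I) I) :
    PiecewiseMonotoneOn f I := by
  obtain ⟨K, hK, hmono⟩ := hDf
  set C := connectedComponentIn (I \ K)
  -- `cut x` depends on `x` only through its component, so each component gets a single point
  let cut : ℝ → ℝ := fun x => Classical.epsilon (IsSignCut (derivWithin f I) (C x))
  have hcut : ∀ x ∈ I \ K, IsSignCut (derivWithin f I) (C x) (cut x) := fun x hx =>
    Classical.epsilon_spec <|
      (hmono x hx).exists_isSignCut isPreconnected_connectedComponentIn.ordConnected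
        ⟨x, mem_connectedComponentIn hx⟩
  refine ⟨K ∪ cut '' (I \ K), hK.union_of_subsingleton hI ?_ ?_, fun x hx => ?_⟩
  · rintro _ ⟨x, hx, rfl⟩
    exact (connectedComponentIn_subset _ _ (hcut x hx).1).1
  · rintro x - _ ⟨⟨y, hy, rfl⟩, hyx⟩ _ ⟨⟨z, hz, rfl⟩, hzx⟩
    have hCy : C y = C x :=
      (connectedComponentIn_eq (hcut y hy).1).trans (connectedComponentIn_eq hyx).symm
    have hCz : C z = C x :=
      (connectedComponentIn_eq (hcut z hz).1).trans (connectedComponentIn_eq hzx).symm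
    simp only [cut, hCy, hCz]
  · have hxK : x ∈ I \ K := ⟨hx.1, fun h => hx.2 (Or.inl h)⟩
    have hsub : connectedComponentIn (I \ (K ∪ cut '' (I \ K))) x ⊆ C x :=
      connectedComponentIn_mono x (sdiff_subset_sdiff_right subset_union_left)
    refine monoOn_of_hasConstSignOn_derivWithin (hf.differentiableOn one_ne_zero)
      isPreconnected_connectedComponentIn.ordConnected
      ((connectedComponentIn_subset _ _).trans sdiff_subset)
      ((hcut x hxK).hasConstSignOn isPreconnected_connectedComponentIn.ordConnected hsub ?_)
    exact fun h => (connectedComponentIn_subset _ _ h).2 (Or.inr ⟨x, hxK, rfl⟩)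

/-- If the derivative of a `C¹` function is piecewise monotone, then so is the
function itself. -/
theorem piecewiseMonotone_of_deriv_piecewiseMonotone
    (I : Set ℝ) (hI : I.OrdConnected) (hnt : I.Nontrivial)
    (f : ℝ → ℝ) (hf : ContDiffOn ℝ 1 f I)
    (hDf : PiecewiseMonotoneOn (derivWithin f I) I) :
    PiecewiseMonotoneOn f I :=
  piecewiseMonotone_of_deriv_piecewiseMonotone_general I hI f hf hDf
end

section
/- If f ∈ C^∞[c,d] satisfies D^{n+1} f(x) > 0 for all x ∈ (c,d), and j > n is the least index > n with D^j f(c) ≠ 0 (if one exists), then D^j f(c) > 0; and if j > n is the least index > n with D^j f(d) ≠ 0 (if one exists), then (−1)^{n+j+1} D^j f(d) > 0. -/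
open Set Filter Topology

private lemma iterShift {c d : ℝ} (hcd : c < d) :
    ∀ (m : ℕ) (f : ℝ → ℝ) (i : ℕ) (x : ℝ), x ∈ Icc c d →
      iteratedDerivWithin i (iteratedDerivWithin m f (Icc c d)) (Icc c d) x
        = iteratedDerivWithin (m + i) f (Icc c d) x := by
  have hs : UniqueDiffOn ℝ (Icc c d) := uniqueDiffOn_Icc hcd
  intro m
  induction m with
  | zero =>
    intro f i x hx
    have : iteratedDerivWithin 0 f (Icc c d) = f := by
      funext y; simp [iteratedDerivWithin_zero]
    rw [this]; simp
  | succ m ih =>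
    intro f i x hx
    have h1 : Set.EqOn (iteratedDerivWithin (m + 1) f (Icc c d))
        (iteratedDerivWithin m (derivWithin f (Icc c d)) (Icc c d)) (Icc c d) :=
      fun y hy => by rw [iteratedDerivWithin_succ']
    calc iteratedDerivWithin i (iteratedDerivWithin (m + 1) f (Icc c d)) (Icc c d) x
        = iteratedDerivWithin i (iteratedDerivWithin m (derivWithin f (Icc c d)) (Icc c d))
            (Icc c d) x := iteratedDerivWithin_congr h1 hx
      _ = iteratedDerivWithin (m + i) (derivWithin f (Icc c d)) (Icc c d) x := ih _ _ _ hx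
      _ = iteratedDerivWithin (m + i + 1) f (Icc c d) x :=
            (congrFun iteratedDerivWithin_succ' x).symm
      _ = iteratedDerivWithin (m + 1 + i) f (Icc c d) x := by ring_nf

private lemma smoothIter {c d : ℝ} (hcd : c < d) {f : ℝ → ℝ}
    (hf : ContDiffOn ℝ (⊤ : ℕ∞) f (Icc c d)) (m : ℕ) :
    ContDiffOn ℝ (⊤ : ℕ∞) (iteratedDerivWithin m f (Icc c d)) (Icc c d) := by
  have hs : UniqueDiffOn ℝ (Icc c d) := uniqueDiffOn_Icc hcd
  induction m with
  | zero =>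
    have : iteratedDerivWithin 0 f (Icc c d) = f := by
      funext y; simp [iteratedDerivWithin_zero]
    rw [this]; exact hf
  | succ m ih =>
    have h1 : ContDiffOn ℝ (⊤ : ℕ∞) (derivWithin (iteratedDerivWithin m f (Icc c d)) (Icc c d))
        (Icc c d) := ih.derivWithin hs (by simp)
    exact h1.congr fun y hy => congrFun iteratedDerivWithin_succ y

private lemma nearLeft {c d : ℝ} (hcd : c < d) :
    ∀ (k : ℕ) (g : ℝ → ℝ), ContDiffOn ℝ (⊤ : ℕ∞) g (Icc c d) →
      (∀ i < k, iteratedDerivWithin i g (Icc c d) c = 0) →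
      0 < iteratedDerivWithin k g (Icc c d) c →
      ∃ e, c < e ∧ e ≤ d ∧ ∀ x ∈ Ioo c e, 0 < g x := by
  have hs : UniqueDiffOn ℝ (Icc c d) := uniqueDiffOn_Icc hcd
  have hcmem : c ∈ Icc c d := left_mem_Icc.2 hcd.le
  intro k
  induction k with
  | zero =>
    intro g hg _ hk
    rw [iteratedDerivWithin_zero] at hk
    have hcont : ContinuousWithinAt g (Icc c d) c := hg.continuousOn c hcmem
    have hev : ∀ᶠ x in 𝓝[Icc c d] c, 0 < g x := hcont (isOpen_Ioi.mem_nhds hk)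
    have hev2 : ∀ᶠ x in 𝓝[>] c, 0 < g x := by
      rw [← nhdsWithin_Ioo_eq_nhdsGT hcd]
      exact hev.filter_mono (nhdsWithin_mono c Ioo_subset_Icc_self)
    obtain ⟨u, hu, hsub⟩ := mem_nhdsGT_iff_exists_Ioo_subset.1 hev2
    refine ⟨min u d, lt_min hu hcd, min_le_right _ _, fun x hx => ?_⟩
    exact hsub ⟨hx.1, lt_of_lt_of_le hx.2 (min_le_left _ _)⟩
  | succ k ih =>
    intro g hg h0 hk
    have hg' : ContDiffOn ℝ (⊤ : ℕ∞) (derivWithin g (Icc c d)) (Icc c d) :=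
      hg.derivWithin hs (by simp)
    have h0' : ∀ i < k, iteratedDerivWithin i (derivWithin g (Icc c d)) (Icc c d) c = 0 := by
      intro i hi
      rw [← iteratedDerivWithin_succ']
      exact h0 (i + 1) (by omega)
    have hk' : 0 < iteratedDerivWithin k (derivWithin g (Icc c d)) (Icc c d) c := by
      rw [← iteratedDerivWithin_succ']; exact hk
    obtain ⟨e, hce, hed, he⟩ := ih _ hg' h0' hk'
    have hgc0 : g c = 0 := by
      have := h0 0 (by omega); rwa [iteratedDerivWithin_zero] at this
    have hmono : StrictMonoOn g (Icc c e) := by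
      apply strictMonoOn_of_deriv_pos (convex_Icc c e)
        (hg.continuousOn.mono (Icc_subset_Icc le_rfl hed))
      intro x hx
      rw [interior_Icc] at hx
      have hx' : x ∈ Ioo c d := ⟨hx.1, lt_of_lt_of_le hx.2 hed⟩
      have hnhds : Icc c d ∈ 𝓝 x := Icc_mem_nhds hx'.1 hx'.2
      rw [← derivWithin_of_mem_nhds hnhds]
      exact he x ⟨hx.1, hx.2⟩
    refine ⟨e, hce, hed, ?_⟩
    intro x hx
    have := hmono (left_mem_Icc.2 hce.le) ⟨hx.1.le, hx.2.le⟩ hx.1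
    rwa [hgc0] at this

private lemma nearRight {c d : ℝ} (hcd : c < d) :
    ∀ (k : ℕ) (g : ℝ → ℝ), ContDiffOn ℝ (⊤ : ℕ∞) g (Icc c d) →
      (∀ i < k, iteratedDerivWithin i g (Icc c d) d = 0) →
      0 < (-1 : ℝ) ^ k * iteratedDerivWithin k g (Icc c d) d →
      ∃ e, c ≤ e ∧ e < d ∧ ∀ x ∈ Ioo e d, 0 < g x := by
  have hs : UniqueDiffOn ℝ (Icc c d) := uniqueDiffOn_Icc hcd
  have hdmem : d ∈ Icc c d := right_mem_Icc.2 hcd.le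
  intro k
  induction k with
  | zero =>
    intro g hg _ hk
    rw [iteratedDerivWithin_zero] at hk
    simp only [pow_zero, one_mul] at hk
    have hcont : ContinuousWithinAt g (Icc c d) d := hg.continuousOn d hdmem
    have hev : ∀ᶠ x in 𝓝[Icc c d] d, 0 < g x := hcont (isOpen_Ioi.mem_nhds hk)
    have hev2 : ∀ᶠ x in 𝓝[<] d, 0 < g x := by
      rw [← nhdsWithin_Ioo_eq_nhdsLT hcd]
      exact hev.filter_mono (nhdsWithin_mono d Ioo_subset_Icc_self)
    obtain ⟨u, hu, hsub⟩ := mem_nhdsLT_iff_exists_Ioo_subset.1 hev2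
    refine ⟨max u c, le_max_right _ _, max_lt hu hcd, fun x hx => ?_⟩
    exact hsub ⟨lt_of_le_of_lt (le_max_left _ _) hx.1, hx.2⟩
  | succ k ih =>
    intro g hg h0 hk
    have hg' : ContDiffOn ℝ (⊤ : ℕ∞) (derivWithin g (Icc c d)) (Icc c d) :=
      hg.derivWithin hs (by simp)
    have h0' : ∀ i < k,
        iteratedDerivWithin i (fun x => -derivWithin g (Icc c d) x) (Icc c d) d = 0 := by
      intro i hi
      rw [show (fun x => -derivWithin g (Icc c d) x) = -derivWithin g (Icc c d) from rfl, iteratedDerivWithin_neg, ← iteratedDerivWithin_succ']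
      rw [h0 (i + 1) (by omega), neg_zero]
    have hk' : 0 < (-1 : ℝ) ^ k *
        iteratedDerivWithin k (fun x => -derivWithin g (Icc c d) x) (Icc c d) d := by
      rw [show (fun x => -derivWithin g (Icc c d) x) = -derivWithin g (Icc c d) from rfl, iteratedDerivWithin_neg, ← iteratedDerivWithin_succ']
      have : (-1 : ℝ) ^ (k + 1) = (-1) * (-1 : ℝ) ^ k := by ring
      rw [this] at hk; linarith [hk]
    obtain ⟨e, hce, hed, he⟩ := ih _ hg'.neg h0' hk'
    have hgd0 : g d = 0 := by
      have := h0 0 (by omega); rwa [iteratedDerivWithin_zero] at this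
    have hanti : StrictAntiOn g (Icc e d) := by
      apply strictAntiOn_of_deriv_neg (convex_Icc e d)
        (hg.continuousOn.mono (Icc_subset_Icc hce le_rfl))
      intro x hx
      rw [interior_Icc] at hx
      have hx' : x ∈ Ioo c d := ⟨lt_of_le_of_lt hce hx.1, hx.2⟩
      have hnhds : Icc c d ∈ 𝓝 x := Icc_mem_nhds hx'.1 hx'.2
      rw [← derivWithin_of_mem_nhds hnhds]
      have := he x ⟨hx.1, hx.2⟩
      simpa using this
    refine ⟨e, hce, hed, ?_⟩
    intro x hx
    have := hanti ⟨hx.1.le, hx.2.le⟩ (right_mem_Icc.2 hed.le) hx.2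
    rwa [hgd0] at this

/-- For `f ∈ C^∞[c,d]` with `D^{n+1} f > 0` on `(c,d)`: the least `j > n` with
`D^j f(c) ≠ 0` (if any) satisfies `D^j f(c) > 0`, and the least `j > n` with
`D^j f(d) ≠ 0` (if any) satisfies `(−1)^{n+j+1} D^j f(d) > 0`. -/
theorem sign_of_least_nonzero_higher_deriv
    (n : ℕ) (c d : ℝ) (hcd : c < d) (f : ℝ → ℝ)
    (hf : ContDiffOn ℝ (⊤ : ℕ∞) f (Icc c d))
    (hpos : ∀ x ∈ Ioo c d, 0 < iteratedDerivWithin (n + 1) f (Icc c d) x) :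
    (∀ j, n < j → iteratedDerivWithin j f (Icc c d) c ≠ 0 →
      (∀ i, n < i → i < j → iteratedDerivWithin i f (Icc c d) c = 0) →
      0 < iteratedDerivWithin j f (Icc c d) c) ∧
    (∀ j, n < j → iteratedDerivWithin j f (Icc c d) d ≠ 0 →
      (∀ i, n < i → i < j → iteratedDerivWithin i f (Icc c d) d = 0) →
      0 < (-1 : ℝ) ^ (n + j + 1) * iteratedDerivWithin j f (Icc c d) d) := by
  have hs : UniqueDiffOn ℝ (Icc c d) := uniqueDiffOn_Icc hcd
  have hcmem : c ∈ Icc c d := left_mem_Icc.2 hcd.le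
  have hdmem : d ∈ Icc c d := right_mem_Icc.2 hcd.le
  set g : ℝ → ℝ := iteratedDerivWithin (n + 1) f (Icc c d) with hgdef
  have hgsm : ContDiffOn ℝ (⊤ : ℕ∞) g (Icc c d) := smoothIter hcd hf (n + 1)
  constructor
  · intro j hj hne hzero
    by_contra hle
    have hlt : iteratedDerivWithin j f (Icc c d) c < 0 :=
      lt_of_le_of_ne (not_lt.1 hle) hne
    set k := j - (n + 1) with hkdef
    have hjk : j = n + 1 + k := by omega
    obtain ⟨e, hce, hed, he⟩ := nearLeft hcd k (fun x => -g x) hgsm.neg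
      (by
        intro i hi
        rw [show (fun x => -g x) = -g from rfl, iteratedDerivWithin_neg, iterShift hcd (n + 1) f i c hcmem]
        rw [hzero (n + 1 + i) (by omega) (by omega), neg_zero])
      (by
        rw [show (fun x => -g x) = -g from rfl, iteratedDerivWithin_neg, iterShift hcd (n + 1) f k c hcmem, ← hjk]
        linarith)
    have hx : (c + e) / 2 ∈ Ioo c e := ⟨by linarith, by linarith⟩
    have hx2 : (c + e) / 2 ∈ Ioo c d := ⟨hx.1, lt_of_lt_of_le hx.2 hed⟩
    have := he _ hx
    have := hpos _ hx2
    simp only [hgdef] at *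
    linarith
  · intro j hj hne hzero
    by_contra hle
    have hne' : (-1 : ℝ) ^ (n + j + 1) * iteratedDerivWithin j f (Icc c d) d ≠ 0 := by
      apply mul_ne_zero _ hne
      exact pow_ne_zero _ (by norm_num)
    have hlt : (-1 : ℝ) ^ (n + j + 1) * iteratedDerivWithin j f (Icc c d) d < 0 :=
      lt_of_le_of_ne (not_lt.1 hle) hne'
    set k := j - (n + 1) with hkdef
    have hjk : j = n + 1 + k := by omega
    have hsign : (-1 : ℝ) ^ (n + j + 1) = (-1 : ℝ) ^ k := by
      have : n + j + 1 = 2 * (n + 1) + k := by omega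
      rw [this, pow_add, pow_mul, neg_one_sq, one_pow, one_mul]
    rw [hsign] at hlt
    obtain ⟨e, hce, hed, he⟩ := nearRight hcd k (fun x => -g x) hgsm.neg
      (by
        intro i hi
        rw [show (fun x => -g x) = -g from rfl, iteratedDerivWithin_neg, iterShift hcd (n + 1) f i d hdmem]
        rw [hzero (n + 1 + i) (by omega) (by omega), neg_zero])
      (by
        rw [show (fun x => -g x) = -g from rfl, iteratedDerivWithin_neg, iterShift hcd (n + 1) f k d hdmem, ← hjk]
        linarith [hlt])
    have hx : (e + d) / 2 ∈ Ioo e d := ⟨by linarith, by linarith⟩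
    have hx2 : (e + d) / 2 ∈ Ioo c d := ⟨lt_of_le_of_lt hce hx.1, hx.2⟩
    have := he _ hx
    have := hpos _ hx2
    simp only [hgdef] at *
    linarith
end
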